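/- arXiv:2112.06380 — 2 statements merged into one kernel-verified Lean document; each statement's English description precedes it below -/
import Mathlib

section
/- Let π* be any permutation of [n] and let ε > 0. For any scaling parameters 0 < φ, φ' < 1 with |φ − φ'| ≤ ε/n², the total variation distance satisfies D_TV(M(φ, π*), M(φ', π*)) ≤ ε. -/
open scoped Classical
open Finset

namespace Mallows

/-- Kendall-tau distance between two permutations of `Fin n`: the number of pairs of
elements whose relative order differs in the two permutations. -/
noncomputable def dKT {n : ℕ} (π σ : Equiv.Perm (Fin n)) : ℕ :=
  (Finset.univ.filter (fun p : Fin n × Fin n =>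
    p.1 < p.2 ∧ ¬((π.symm p.1 < π.symm p.2) ↔ (σ.symm p.1 < σ.symm p.2)))).card

/-- Probability mass function of the Mallows model `M(φ, π₀)`. -/
noncomputable def mallowsPMF {n : ℕ} (φ : ℝ) (π₀ π : Equiv.Perm (Fin n)) : ℝ :=
  φ ^ dKT π π₀ / ∑ σ : Equiv.Perm (Fin n), φ ^ dKT σ π₀

/-- Expectation of `f` under `M(φ, π₀)`. -/
noncomputable def mExp {n : ℕ} (φ : ℝ) (π₀ : Equiv.Perm (Fin n))
    (f : Equiv.Perm (Fin n) → ℝ) : ℝ :=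
  ∑ π : Equiv.Perm (Fin n), mallowsPMF φ π₀ π * f π

/-- Probability of the event `A` under `M(φ, π₀)`. -/
noncomputable def mProb {n : ℕ} (φ : ℝ) (π₀ : Equiv.Perm (Fin n))
    (A : Equiv.Perm (Fin n) → Prop) : ℝ :=
  ∑ π : Equiv.Perm (Fin n), if A π then mallowsPMF φ π₀ π else 0

/-- Total variation distance between two pmfs on permutations of `Fin n`. -/
noncomputable def tvDist {n : ℕ} (p q : Equiv.Perm (Fin n) → ℝ) : ℝ :=
  (∑ π : Equiv.Perm (Fin n), |p π - q π|) / 2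

/-- Kullback–Leibler divergence between two pmfs on permutations of `Fin n`. -/
noncomputable def klDiv {n : ℕ} (p q : Equiv.Perm (Fin n) → ℝ) : ℝ :=
  ∑ π : Equiv.Perm (Fin n), p π * Real.log (p π / q π)

/-- Position vector of a permutation: entry `i` is the position `π⁻¹ i` of element `i`. -/
noncomputable def posVec {n : ℕ} (π : Equiv.Perm (Fin n)) : EuclideanSpace ℝ (Fin n) :=
  WithLp.toLp 2 fun i => ((π.symm i).1 : ℝ)

/-- Front adjustment vector of `π` with respect to `π̂`: entry `i` counts the elements `j`
with `π̂⁻¹ j < π̂⁻¹ i` and `π⁻¹ j > π⁻¹ i`. -/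
noncomputable def leftAdj {n : ℕ} (πh π : Equiv.Perm (Fin n)) : EuclideanSpace ℝ (Fin n) :=
  WithLp.toLp 2 fun i => ((Finset.univ.filter (fun j : Fin n =>
    πh.symm j < πh.symm i ∧ π.symm i < π.symm j)).card : ℝ)

/-- Back adjustment vector of `π` with respect to `π̂`: entry `i` counts the elements `j`
with `π̂⁻¹ j > π̂⁻¹ i` and `π⁻¹ j < π⁻¹ i`. -/
noncomputable def rightAdj {n : ℕ} (πh π : Equiv.Perm (Fin n)) : EuclideanSpace ℝ (Fin n) :=
  WithLp.toLp 2 fun i => ((Finset.univ.filter (fun j : Fin n =>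
    πh.symm i < πh.symm j ∧ π.symm j < π.symm i)).card : ℝ)

/-! Swapping the two elements of a pair on which `π` and `π₀` disagree strictly lowers
`dKT π π₀`, and `π` has `dKT π π₀` such pairs. Hence for `0 ≤ a ≤ b ≤ 1` and `d = dKT π π₀`,
`b ^ d - a ^ d ≤ (b - a) d b ^ (d - 1) ≤ (b - a) ∑_{x, y} b ^ dKT (swap x y * π) π₀`, and summing
over `π` gives `Z(b) - Z(a) ≤ (b - a) n² Z(b)` for the partition function `Z`. As the weights
`a ^ d` lie pointwise below `b ^ d`, the total variation distance between the two normalisations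
is at most `1 - Z(a) / Z(b)`. -/

section Discordance

variable {α β : Type*} [LinearOrder β] {P g : α → β}

def Discordant (P g : α → β) (u v : α) : Prop :=
  ¬((P u < P v) ↔ (g u < g v))

theorem Discordant.ne {u v : α} (h : Discordant P g u v) : u ≠ v := by
  rintro rfl
  exact h (iff_of_false (lt_irrefl _) (lt_irrefl _))

theorem Discordant.symm (hP : P.Injective) (hg : g.Injective) {u v : α}
    (h : Discordant P g u v) : Discordant P g v u := by
  have hPuv := hP.ne h.ne
  have hguv := hg.ne h.ne
  unfold Discordant at h ⊢
  grind

theorem card_discordant_eq_two_mul [LinearOrder α] [Fintype α] (hP : P.Injective)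
    (hg : g.Injective) :
    #{p : α × α | Discordant P g p.1 p.2}
      = 2 * #{p : α × α | p.1 < p.2 ∧ Discordant P g p.1 p.2} := by
  have hsplit : #{p : α × α | Discordant P g p.1 p.2}
      = #{p : α × α | p.1 < p.2 ∧ Discordant P g p.1 p.2}
        + #{p : α × α | p.2 < p.1 ∧ Discordant P g p.1 p.2} := by
    rw [← card_union_of_disjoint (disjoint_filter.2 fun p _ h₁ h₂ => lt_asymm h₁.1 h₂.1),
      ← filter_or]
    congr 1
    ext p
    simp only [mem_filter, mem_univ, true_and]
    exact ⟨fun h => h.ne.lt_or_gt.imp (⟨·, h⟩) (⟨·, h⟩), fun h => h.elim (·.2) (·.2)⟩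
  have hswap : #{p : α × α | p.2 < p.1 ∧ Discordant P g p.1 p.2}
      = #{p : α × α | p.1 < p.2 ∧ Discordant P g p.1 p.2} := by
    rw [card_filter, card_filter]
    refine Fintype.sum_equiv (Equiv.prodComm α α) _ _ fun p => if_congr ?_ rfl rfl
    exact ⟨fun h => ⟨h.1, h.2.symm hP hg⟩, fun h => ⟨h.1, h.2.symm hP hg⟩⟩
  omega

variable [DecidableEq α]

theorem discordant_comp_swap_add_le {x y : α}
    (hxy : Discordant P g x y) (u v : α) :
    (if Discordant (P ∘ Equiv.swap x y) g u v then 1 else 0) +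
        (if Discordant (P ∘ Equiv.swap x y) g (Equiv.swap x y u) (Equiv.swap x y v) then 1 else 0)
      ≤ (if Discordant P g u v then 1 else 0) +
        (if Discordant P g (Equiv.swap x y u) (Equiv.swap x y v) then 1 else 0) := by
  -- For a third element `w`, the swap can only add a discordance on `{x, w}` or `{y, w}` if `w`
  -- lies between `x` and `y` in both orders, which would make `x, y` concordant.
  unfold Discordant at hxy ⊢
  simp only [Function.comp_apply, Equiv.swap_apply_self]
  simp only [Equiv.swap_apply_def]
  split_ifs <;> grind

theorem not_discordant_comp_swap (hP : P.Injective) {x y : α} (hxy : Discordant P g x y) :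
    ¬Discordant (P ∘ Equiv.swap x y) g x y := by
  have hPxy := hP.ne hxy.ne
  unfold Discordant at hxy ⊢
  simp only [Function.comp_apply, Equiv.swap_apply_left, Equiv.swap_apply_right]
  grind

theorem card_discordant_comp_swap_lt [Fintype α] (hP : P.Injective) (hg : g.Injective)
    {x y : α} (hxy : Discordant P g x y) :
    #{p : α × α | Discordant (P ∘ Equiv.swap x y) g p.1 p.2}
      < #{p : α × α | Discordant P g p.1 p.2} := by
  let s := Equiv.swap x y
  have hreindex : ∀ Q : α → β, ∑ p : α × α, (if Discordant Q g (s p.1) (s p.2) then 1 else 0)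
      = #{p : α × α | Discordant Q g p.1 p.2} := fun Q => by
    rw [card_filter]
    exact Fintype.sum_equiv (s.prodCongr s) _ _ fun _ => rfl
  have hstrict :
      (if Discordant (P ∘ s) g x y then 1 else 0) +
          (if Discordant (P ∘ s) g (s x) (s y) then 1 else 0)
        < (if Discordant P g x y then 1 else 0) +
          (if Discordant P g (s x) (s y) then 1 else 0) := by
    have hyx := not_discordant_comp_swap hP (hxy.symm hP hg)
    rw [Equiv.swap_comm] at hyx
    simp only [s, Equiv.swap_apply_left, Equiv.swap_apply_right, if_pos hxy,
      if_pos (hxy.symm hP hg), if_neg (not_discordant_comp_swap hP hxy), if_neg hyx]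
    norm_num
  have := sum_lt_sum (fun p _ => discordant_comp_swap_add_le hxy p.1 p.2)
    ⟨(x, y), mem_univ _, hstrict⟩
  rw [sum_add_distrib, sum_add_distrib, hreindex, hreindex, ← card_filter, ← card_filter] at this
  exact Nat.lt_of_mul_lt_mul_left (a := 2) (by omega)

end Discordance

theorem sum_abs_div_sum_sub_div_sum_le {ι : Type*} [Fintype ι] {w v : ι → ℝ}
    (hw : ∀ i, 0 ≤ w i) (hwv : ∀ i, w i ≤ v i) (hW : 0 < ∑ i, w i) :
    ∑ i, |w i / ∑ j, w j - v i / ∑ j, v j| ≤ 2 * (1 - (∑ i, w i) / ∑ i, v i) := by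
  set W := ∑ i, w i
  set V := ∑ i, v i
  have hWV : W ≤ V := sum_le_sum fun i _ => hwv i
  have hV : 0 < V := hW.trans_le hWV
  have hpoint : ∀ i, |w i / W - v i / V| ≤ (w i / W - w i / V) + (v i / V - w i / V) := by
    intro i
    have h₁ : w i / V ≤ w i / W := div_le_div_of_nonneg_left (hw i) hW hWV
    have h₂ : w i / V ≤ v i / V := div_le_div_of_nonneg_right (hwv i) hV.le
    rw [abs_sub_le_iff]
    constructor <;> linarith
  calc ∑ i, |w i / W - v i / V|
      ≤ ∑ i, ((w i / W - w i / V) + (v i / V - w i / V)) := sum_le_sum fun i _ => hpoint i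
    _ = (W / W - W / V) + (V / V - W / V) := by
      simp only [sum_add_distrib, sum_sub_distrib, ← sum_div, W, V]
    _ = 2 * (1 - W / V) := by rw [div_self hW.ne', div_self hV.ne']; ring

section Partition

variable {n : ℕ}

theorem dKT_eq_card_discordant (π π₀ : Equiv.Perm (Fin n)) :
    dKT π π₀ = #{p : Fin n × Fin n | p.1 < p.2 ∧ Discordant π.symm π₀.symm p.1 p.2} := by
  unfold dKT Discordant
  congr!

theorem dKT_swap_mul_lt {π π₀ : Equiv.Perm (Fin n)} {x y : Fin n}
    (hxy : Discordant π.symm π₀.symm x y) : dKT (Equiv.swap x y * π) π₀ < dKT π π₀ := by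
  have hsymm : ⇑(Equiv.swap x y * π).symm = π.symm ∘ Equiv.swap x y := by
    ext u
    simp [Equiv.Perm.mul_def]
  have := card_discordant_comp_swap_lt π.symm.injective π₀.symm.injective hxy
  rw [← hsymm, card_discordant_eq_two_mul (Equiv.injective _) π₀.symm.injective,
    card_discordant_eq_two_mul π.symm.injective π₀.symm.injective,
    ← dKT_eq_card_discordant, ← dKT_eq_card_discordant] at this
  omega

theorem pow_dKT_sub_pow_dKT_le (π π₀ : Equiv.Perm (Fin n)) {a b : ℝ} (ha : 0 ≤ a) (hab : a ≤ b)
    (hb : b ≤ 1) :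
    b ^ dKT π π₀ - a ^ dKT π π₀
      ≤ (b - a) * ∑ q : Fin n × Fin n, b ^ dKT (Equiv.swap q.1 q.2 * π) π₀ := by
  have hmean : b ^ dKT π π₀ - a ^ dKT π π₀ ≤ (b - a) * (dKT π π₀ * b ^ (dKT π π₀ - 1)) := by
    have := abs_pow_sub_pow_le b a (dKT π π₀)
    rw [abs_of_nonneg (sub_nonneg.2 hab), abs_of_nonneg (ha.trans hab), abs_of_nonneg ha,
      max_eq_left hab, mul_assoc] at this
    exact (le_abs_self _).trans this
  have hswaps : (dKT π π₀ : ℝ) * b ^ (dKT π π₀ - 1)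
      ≤ ∑ q : Fin n × Fin n, b ^ dKT (Equiv.swap q.1 q.2 * π) π₀ := by
    calc (dKT π π₀ : ℝ) * b ^ (dKT π π₀ - 1)
        = ∑ _q ∈ {p : Fin n × Fin n | p.1 < p.2 ∧ Discordant π.symm π₀.symm p.1 p.2},
            b ^ (dKT π π₀ - 1) := by
          rw [sum_const, nsmul_eq_mul, ← dKT_eq_card_discordant]
      _ ≤ ∑ q ∈ {p : Fin n × Fin n | p.1 < p.2 ∧ Discordant π.symm π₀.symm p.1 p.2},
            b ^ dKT (Equiv.swap q.1 q.2 * π) π₀ :=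
          sum_le_sum fun q hq => pow_le_pow_of_le_one (ha.trans hab) hb
            (Nat.le_sub_one_of_lt (dKT_swap_mul_lt (mem_filter.1 hq).2.2))
      _ ≤ ∑ q : Fin n × Fin n, b ^ dKT (Equiv.swap q.1 q.2 * π) π₀ :=
          sum_le_sum_of_subset_of_nonneg (filter_subset _ _)
            fun _ _ _ => pow_nonneg (ha.trans hab) _
  exact hmean.trans (mul_le_mul_of_nonneg_left hswaps (sub_nonneg.2 hab))

noncomputable def partitionFunction (φ : ℝ) (π₀ : Equiv.Perm (Fin n)) : ℝ :=
  ∑ σ : Equiv.Perm (Fin n), φ ^ dKT σ π₀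

theorem partitionFunction_sub_le (π₀ : Equiv.Perm (Fin n)) {a b : ℝ} (ha : 0 ≤ a) (hab : a ≤ b)
    (hb : b ≤ 1) :
    partitionFunction b π₀ - partitionFunction a π₀ ≤ (b - a) * n ^ 2 * partitionFunction b π₀ := by
  unfold partitionFunction
  rw [← sum_sub_distrib]
  calc ∑ π, (b ^ dKT π π₀ - a ^ dKT π π₀)
      ≤ ∑ π, (b - a) * ∑ q : Fin n × Fin n, b ^ dKT (Equiv.swap q.1 q.2 * π) π₀ :=
        sum_le_sum fun π _ => pow_dKT_sub_pow_dKT_le π π₀ ha hab hb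
    _ = (b - a) * ∑ q : Fin n × Fin n, ∑ π, b ^ dKT (Equiv.swap q.1 q.2 * π) π₀ := by
        rw [← mul_sum, sum_comm]
    _ = (b - a) * ∑ _q : Fin n × Fin n, ∑ π, b ^ dKT π π₀ := by
        congr 1
        exact sum_congr rfl fun q _ =>
          Equiv.sum_comp (Equiv.mulLeft (Equiv.swap q.1 q.2)) fun π => b ^ dKT π π₀
    _ = (b - a) * n ^ 2 * ∑ π, b ^ dKT π π₀ := by
        simp only [sum_const, card_univ, Fintype.card_prod, Fintype.card_fin, nsmul_eq_mul]
        push_cast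
        ring

theorem tvDist_mallowsPMF_le (π₀ : Equiv.Perm (Fin n)) {a b : ℝ} (ha : 0 < a) (hab : a ≤ b)
    (hb : b ≤ 1) :
    tvDist (mallowsPMF a π₀) (mallowsPMF b π₀) ≤ (b - a) * n ^ 2 := by
  have hZa : 0 < partitionFunction a π₀ :=
    sum_pos (fun σ _ => pow_pos ha _) univ_nonempty
  have hZab : partitionFunction a π₀ ≤ partitionFunction b π₀ :=
    sum_le_sum fun σ _ => pow_le_pow_left₀ ha.le hab _
  have hZb : 0 < partitionFunction b π₀ := hZa.trans_le hZab
  have hsum : ∑ π, |mallowsPMF a π₀ π - mallowsPMF b π₀ π|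
      ≤ 2 * (1 - partitionFunction a π₀ / partitionFunction b π₀) :=
    sum_abs_div_sum_sub_div_sum_le (w := fun π => a ^ dKT π π₀) (fun π => pow_nonneg ha.le _)
      (fun π => pow_le_pow_left₀ ha.le hab _) hZa
  have hgap := partitionFunction_sub_le π₀ ha.le hab hb
  calc tvDist (mallowsPMF a π₀) (mallowsPMF b π₀)
      ≤ 1 - partitionFunction a π₀ / partitionFunction b π₀ := by
        unfold tvDist
        linarith
    _ = (partitionFunction b π₀ - partitionFunction a π₀) / partitionFunction b π₀ := by
        field_simp
    _ ≤ (b - a) * n ^ 2 := by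
        rwa [div_le_iff₀ hZb]

theorem tvDist_comm (p q : Equiv.Perm (Fin n) → ℝ) : tvDist p q = tvDist q p := by
  simp only [tvDist, abs_sub_comm]

end Partition

/-- TV continuity in the scaling parameter. If `|φ - φ'| ≤ ε / n²`
then `D_TV(M(φ, π₀), M(φ', π₀)) ≤ ε`. -/
theorem tv_close_scaling (n : ℕ) (π₀ : Equiv.Perm (Fin n)) (ε φ φ' : ℝ) (hε : 0 < ε)
    (hφ0 : 0 < φ) (hφ1 : φ < 1) (hφ'0 : 0 < φ') (hφ'1 : φ' < 1)
    (h : |φ - φ'| ≤ ε / (n : ℝ) ^ 2) :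
    tvDist (mallowsPMF φ π₀) (mallowsPMF φ' π₀) ≤ ε := by
  wlog hle : φ ≤ φ' generalizing φ φ'
  · rw [tvDist_comm]
    exact this φ' φ hφ'0 hφ'1 hφ0 hφ1 (by rwa [abs_sub_comm]) (le_of_not_ge hle)
  have hgap : (φ' - φ) * n ^ 2 ≤ ε := by
    rcases Nat.eq_zero_or_pos n with rfl | hn
    · simpa using hε.le
    · rw [abs_sub_comm, abs_of_nonneg (sub_nonneg.2 hle)] at h
      exact (le_div_iff₀ (by positivity)).1 h
  exact (tvDist_mallowsPMF_le π₀ hφ0 hle hφ'1.le).trans hgap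

end Mallows
end

section
/- There is a universal constant c > 0 such that the following holds for every 0 < ε < 1, every integer K ≥ 1, and every even n with √n ≤ K/ε: there exist a scaling parameter 0 < φ < 1 and two permutations π*, σ* of [n] such that D_TV(M(φ, π*), M(φ, σ*)) ≥ c·ε·√n/K, yet for every subset T ⊆ [n] with |T| = K, the total variation distance between the distribution of the induced permutation π|_T for π ~ M(φ, π*) and the distribution of σ|_T for σ ~ M(φ, σ*) is at most ε. -/
open scoped Classical
open Finset

namespace Mallows

/-- The pairwise-order pattern of `π` on a `K`-element subset `T`: a complete encoding of
the permutation induced by `π` on `T` (via its order isomorphism with `Fin K`). -/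
noncomputable def inducedPattern {n K : ℕ} (T : Finset (Fin n)) (h : T.card = K)
    (π : Equiv.Perm (Fin n)) : Fin K → Fin K → Bool :=
  fun a b =>
    decide (π.symm ((T.orderIsoOfFin h a : Fin n)) < π.symm ((T.orderIsoOfFin h b : Fin n)))

/-- Total variation distance between the distributions, under `M(φ, π₀)` and `M(φ, σ₀)`,
of the permutation induced on the subset `T` (encoded by its pairwise-order pattern). -/
noncomputable def inducedTV {n K : ℕ} (φ : ℝ) (π₀ σ₀ : Equiv.Perm (Fin n))
    (T : Finset (Fin n)) (h : T.card = K) : ℝ :=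
  (∑ f : Fin K → Fin K → Bool,
    |(∑ π : Equiv.Perm (Fin n), if inducedPattern T h π = f then mallowsPMF φ π₀ π else 0)
      - ∑ π : Equiv.Perm (Fin n), if inducedPattern T h π = f then mallowsPMF φ σ₀ π else 0|) / 2



variable {m : ℕ}

/-- block index of an element -/
def blk (x : Fin (m + m)) : Fin m := ⟨x.val / 2, by omega⟩

def emb0 (i : Fin m) : Fin (m + m) := ⟨2 * i.val, by omega⟩
def emb1 (i : Fin m) : Fin (m + m) := ⟨2 * i.val + 1, by omega⟩

lemma blk_emb0 (i : Fin m) : blk (emb0 i) = i := by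
  apply Fin.ext; simp [blk, emb0]

lemma blk_emb1 (i : Fin m) : blk (emb1 i) = i := by
  apply Fin.ext; simp [blk, emb1]; omega

def gammaFun (S : Finset (Fin m)) (x : Fin (m + m)) : Fin (m + m) :=
  if blk x ∈ S then ⟨2 * (x.val / 2) + (1 - x.val % 2), by omega⟩ else x

lemma gammaFun_invol (S : Finset (Fin m)) : Function.Involutive (gammaFun S) := by
  intro x
  unfold gammaFun
  by_cases h : blk x ∈ S
  · have hb : blk (⟨2 * (x.val / 2) + (1 - x.val % 2), by omega⟩ : Fin (m+m)) = blk x := by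
      simp [blk]; omega
    rw [if_pos h, hb, if_pos h]
    apply Fin.ext
    simp
    omega
  · rw [if_neg h, if_neg h]

/-- the involution flipping each block in `S` -/
def gamma (S : Finset (Fin m)) : Equiv.Perm (Fin (m + m)) :=
  (gammaFun_invol S).toPerm

lemma gamma_apply (S : Finset (Fin m)) (x : Fin (m+m)) : gamma S x = gammaFun S x := rfl

lemma gamma_symm (S : Finset (Fin m)) : (gamma S).symm = gamma S := rfl

lemma blk_gamma (S : Finset (Fin m)) (x : Fin (m+m)) : blk (gamma S x) = blk x := by
  rw [gamma_apply]
  unfold gammaFun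
  split
  · simp [blk]; omega
  · rfl

lemma gamma_apply_not_mem {S : Finset (Fin m)} {x : Fin (m+m)} (h : blk x ∉ S) :
    gamma S x = x := by
  rw [gamma_apply]; unfold gammaFun; rw [if_neg h]

lemma gamma_emb0 {S : Finset (Fin m)} {i : Fin m} (h : i ∈ S) :
    gamma S (emb0 i) = emb1 i := by
  rw [gamma_apply]; unfold gammaFun
  rw [if_pos (by rwa [blk_emb0])]
  apply Fin.ext; simp [emb0, emb1]; try omega

lemma gamma_emb1 {S : Finset (Fin m)} {i : Fin m} (h : i ∈ S) :
    gamma S (emb1 i) = emb0 i := by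
  rw [gamma_apply]; unfold gammaFun
  rw [if_pos (by rwa [blk_emb1])]
  apply Fin.ext; simp [emb0, emb1]; omega

lemma gamma_strictMono_off {S : Finset (Fin m)} {x y : Fin (m+m)} (h : blk x < blk y) :
    gamma S x < gamma S y := by
  have hx : (gamma S x).val ≤ 2 * (blk x).val + 1 := by
    rw [gamma_apply]; unfold gammaFun; split <;> simp [blk] <;> omega
  have hy : 2 * (blk y).val ≤ (gamma S y).val := by
    rw [gamma_apply]; unfold gammaFun; split <;> simp [blk] <;> omega
  have : (blk x).val < (blk y).val := h
  exact Fin.lt_def.mpr (by omega)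

def tauP (m : ℕ) : Equiv.Perm (Fin (m + m)) := gamma Finset.univ


/-- natural order at block i -/
def natp (π : Equiv.Perm (Fin (m+m))) (i : Fin m) : Prop :=
  π.symm (emb0 i) < π.symm (emb1 i)

noncomputable def sgn (π : Equiv.Perm (Fin (m+m))) : Finset (Fin m) :=
  Finset.univ.filter (natp π)

noncomputable def Xc (π : Equiv.Perm (Fin (m+m))) : ℕ := (sgn π).card

noncomputable def NS (π : Equiv.Perm (Fin (m+m))) : ℕ :=
  (Finset.univ.filter (fun p : Fin (m+m) × Fin (m+m) =>
    p.1 < p.2 ∧ blk p.1 < blk p.2 ∧ ¬(π.symm p.1 < π.symm p.2))).card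

lemma special_or {x y : Fin (m+m)} (h : x < y) :
    blk x < blk y ∨ (x = emb0 (blk x) ∧ y = emb1 (blk x)) := by
  have h' : x.val < y.val := h
  have hx := x.isLt; have hy := y.isLt
  rcases Nat.lt_or_ge (x.val / 2) (y.val / 2) with h2 | h2
  · exact Or.inl h2
  · right
    constructor
    · apply Fin.ext; simp [emb0, blk]; omega
    · apply Fin.ext; simp [emb1, blk]; omega

lemma emb0_lt_emb1 (i : Fin m) : emb0 i < emb1 i := by
  simp [emb0, emb1, Fin.lt_def]

/-- generic decomposition of dKT into the non-special part and the block part -/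
lemma dKT_decomp (π ρ : Equiv.Perm (Fin (m+m))) :
    dKT π ρ = (Finset.univ.filter (fun p : Fin (m+m) × Fin (m+m) =>
        p.1 < p.2 ∧ blk p.1 < blk p.2 ∧
          ¬((π.symm p.1 < π.symm p.2) ↔ (ρ.symm p.1 < ρ.symm p.2)))).card +
      (Finset.univ.filter (fun i : Fin m =>
        ¬((π.symm (emb0 i) < π.symm (emb1 i)) ↔ (ρ.symm (emb0 i) < ρ.symm (emb1 i))))).card := by
  classical
  set C : Fin (m+m) × Fin (m+m) → Prop := fun p =>
    ¬((π.symm p.1 < π.symm p.2) ↔ (ρ.symm p.1 < ρ.symm p.2)) with hC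
  have hsplit := Finset.card_filter_add_card_filter_not
    (s := Finset.univ.filter (fun p : Fin (m+m) × Fin (m+m) => p.1 < p.2 ∧ C p))
    (p := fun p => blk p.1 < blk p.2)
  rw [Finset.filter_filter, Finset.filter_filter] at hsplit
  have h1 : (Finset.univ.filter (fun p : Fin (m+m) × Fin (m+m) =>
      (p.1 < p.2 ∧ C p) ∧ blk p.1 < blk p.2)) =
      (Finset.univ.filter (fun p : Fin (m+m) × Fin (m+m) =>
      p.1 < p.2 ∧ blk p.1 < blk p.2 ∧ C p)) := by
    apply Finset.filter_congr; intro p _; tauto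
  have h2 : (Finset.univ.filter (fun p : Fin (m+m) × Fin (m+m) =>
      (p.1 < p.2 ∧ C p) ∧ ¬(blk p.1 < blk p.2))).card =
      (Finset.univ.filter (fun i : Fin m =>
        ¬((π.symm (emb0 i) < π.symm (emb1 i)) ↔ (ρ.symm (emb0 i) < ρ.symm (emb1 i))))).card := by
    apply Finset.card_nbij' (fun p => blk p.1) (fun i => (emb0 i, emb1 i))
    · intro p hp
      simp only [Finset.mem_coe, Finset.mem_filter, Finset.mem_univ, true_and] at hp ⊢
      obtain ⟨⟨hlt, hc⟩, hnb⟩ := hp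
      rcases special_or hlt with h | ⟨e0, e1⟩
      · exact absurd h hnb
      · rw [hC] at hc; rw [← e0, ← e1]; exact hc
    · intro i hi
      simp only [Finset.mem_coe, Finset.mem_filter, Finset.mem_univ, true_and] at hi ⊢
      refine ⟨⟨emb0_lt_emb1 i, ?_⟩, ?_⟩
      · rw [hC]; exact hi
      · rw [blk_emb0, blk_emb1]; exact lt_irrefl i
    · intro p hp
      simp only [Finset.mem_coe, Finset.mem_filter, Finset.mem_univ, true_and] at hp
      obtain ⟨⟨hlt, _⟩, hnb⟩ := hp
      rcases special_or hlt with h | ⟨e0, e1⟩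
      · exact absurd h hnb
      · exact Prod.ext e0.symm e1.symm
    · intro i _
      exact blk_emb0 i
  rw [dKT, ← hsplit, h1, h2]

lemma one_symm_apply (x : Fin (m+m)) : (1 : Equiv.Perm (Fin (m+m))).symm x = x := rfl

lemma Xc_le (π : Equiv.Perm (Fin (m+m))) : Xc π ≤ m := by
  simpa [Xc, sgn] using Finset.card_filter_le Finset.univ (natp π)

lemma dKT_one (π : Equiv.Perm (Fin (m+m))) : dKT π 1 = NS π + (m - Xc π) := by
  rw [dKT_decomp]
  congr 1
  · rw [NS]
    apply congrArg
    apply Finset.filter_congr; intro p _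
    constructor
    · rintro ⟨h1, h2, h3⟩
      refine ⟨h1, h2, fun hlt => h3 ?_⟩
      simp only [one_symm_apply]
      exact iff_of_true hlt h1
    · rintro ⟨h1, h2, h3⟩
      refine ⟨h1, h2, fun hiff => h3 ?_⟩
      simp only [one_symm_apply] at hiff
      exact hiff.mpr h1
  · have : (Finset.univ.filter (fun i : Fin m =>
        ¬((π.symm (emb0 i) < π.symm (emb1 i)) ↔
          ((1 : Equiv.Perm (Fin (m+m))).symm (emb0 i) < (1 : Equiv.Perm (Fin (m+m))).symm (emb1 i))))) =
        (Finset.univ.filter (fun i : Fin m => ¬ natp π i)) := by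
      apply Finset.filter_congr; intro i _
      simp only [one_symm_apply, natp]
      have := emb0_lt_emb1 i
      tauto
    rw [this]
    have hsplit := Finset.card_filter_add_card_filter_not
      (s := (Finset.univ : Finset (Fin m))) (p := natp π)
    simp only [Finset.card_univ, Fintype.card_fin] at hsplit
    have : Xc π = (Finset.univ.filter (natp π)).card := rfl
    omega

lemma tau_symm_emb0 (i : Fin m) : (tauP m).symm (emb0 i) = emb1 i := by
  rw [tauP, gamma_symm]; exact gamma_emb0 (Finset.mem_univ i)

lemma tau_symm_emb1 (i : Fin m) : (tauP m).symm (emb1 i) = emb0 i := by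
  rw [tauP, gamma_symm]; exact gamma_emb1 (Finset.mem_univ i)

lemma dKT_tau (π : Equiv.Perm (Fin (m+m))) : dKT π (tauP m) = NS π + Xc π := by
  rw [dKT_decomp]
  congr 1
  · rw [NS]
    apply congrArg
    apply Finset.filter_congr; intro p _
    have hmono : ∀ (hb : blk p.1 < blk p.2), (tauP m).symm p.1 < (tauP m).symm p.2 := by
      intro hb
      rw [tauP, gamma_symm]
      exact gamma_strictMono_off hb
    constructor
    · rintro ⟨h1, h2, h3⟩
      exact ⟨h1, h2, fun hlt => h3 (iff_of_true hlt (hmono h2))⟩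
    · rintro ⟨h1, h2, h3⟩
      exact ⟨h1, h2, fun hiff => h3 (hiff.mpr (hmono h2))⟩
  · have : (Finset.univ.filter (fun i : Fin m =>
        ¬((π.symm (emb0 i) < π.symm (emb1 i)) ↔
          ((tauP m).symm (emb0 i) < (tauP m).symm (emb1 i))))) =
        (Finset.univ.filter (natp π)) := by
      apply Finset.filter_congr; intro i _
      rw [tau_symm_emb0, tau_symm_emb1]
      have h01 := emb0_lt_emb1 i
      have : ¬ (emb1 i < emb0 i) := fun h => absurd (h.trans h01) (lt_irrefl _)
      unfold natp; tauto
    rw [this]; rfl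

lemma gamma_gamma (S : Finset (Fin m)) (x : Fin (m+m)) : gamma S (gamma S x) = x :=
  gammaFun_invol S x

lemma mul_symm_apply (g π : Equiv.Perm (Fin (m+m))) (x : Fin (m+m)) :
    (g * π).symm x = π.symm (g.symm x) := rfl

lemma NS_gamma_mul (S : Finset (Fin m)) (π : Equiv.Perm (Fin (m+m))) :
    NS (gamma S * π) = NS π := by
  unfold NS
  apply Finset.card_nbij' (fun p => (gamma S p.1, gamma S p.2))
    (fun p => (gamma S p.1, gamma S p.2))
  · intro p hp
    rw [Finset.mem_coe, Finset.mem_filter] at hp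
    rw [Finset.mem_coe, Finset.mem_filter]
    simp only [Finset.mem_univ, true_and, mul_symm_apply, gamma_symm] at hp ⊢
    obtain ⟨h1, h2, h3⟩ := hp
    exact ⟨gamma_strictMono_off h2, by rwa [blk_gamma, blk_gamma], h3⟩
  · intro p hp
    rw [Finset.mem_coe, Finset.mem_filter] at hp
    rw [Finset.mem_coe, Finset.mem_filter]
    simp only [Finset.mem_univ, true_and, mul_symm_apply, gamma_symm] at hp ⊢
    obtain ⟨h1, h2, h3⟩ := hp
    refine ⟨gamma_strictMono_off h2, by rwa [blk_gamma, blk_gamma], ?_⟩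
    rwa [gamma_gamma, gamma_gamma]
  · intro p _; simp [gamma_gamma]
  · intro p _; simp [gamma_gamma]

lemma natp_gamma_mul (S : Finset (Fin m)) (π : Equiv.Perm (Fin (m+m))) (i : Fin m) :
    natp (gamma S * π) i ↔ (if i ∈ S then ¬ natp π i else natp π i) := by
  unfold natp
  rw [mul_symm_apply, mul_symm_apply, gamma_symm]
  by_cases h : i ∈ S
  · rw [if_pos h, gamma_emb0 h, gamma_emb1 h]
    have hne : π.symm (emb0 i) ≠ π.symm (emb1 i) := by
      intro hc
      exact absurd (π.symm.injective hc) (ne_of_lt (emb0_lt_emb1 i))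
    constructor
    · intro hlt hlt2; exact absurd (hlt.trans hlt2) (lt_irrefl _)
    · intro hn; rcases lt_or_gt_of_ne hne with h' | h'
      · exact absurd h' hn
      · exact h'
  · rw [if_neg h, gamma_apply_not_mem (by rwa [blk_emb0]), gamma_apply_not_mem (by rwa [blk_emb1])]

lemma sgn_gamma_mul (S : Finset (Fin m)) (π : Equiv.Perm (Fin (m+m))) :
    sgn (gamma S * π) = symmDiff (sgn π) S := by
  ext i
  simp only [sgn, Finset.mem_filter, Finset.mem_univ, true_and, Finset.mem_symmDiff,
    natp_gamma_mul]
  by_cases h : i ∈ S <;> simp [h] <;> tauto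

lemma sum_gamma_mul (S : Finset (Fin m)) (F : Equiv.Perm (Fin (m+m)) → ℝ) :
    ∑ π : Equiv.Perm (Fin (m+m)), F (gamma S * π) = ∑ π : Equiv.Perm (Fin (m+m)), F π :=
  Equiv.sum_comp (Equiv.mulLeft (gamma S)) F

/-- the key averaging identity -/
lemma key_avg (φ : ℝ) (J : Finset (Fin m)) (G : Equiv.Perm (Fin (m+m)) → ℝ)
    (hG : ∀ S ⊆ Jᶜ, ∀ π, G (gamma S * π) = G π)
    (H : Finset (Fin m) → ℝ) :
    (2:ℝ)^(Jᶜ.card) * ∑ π : Equiv.Perm (Fin (m+m)), G π * φ^(NS π) * H (sgn π)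
     = ∑ π : Equiv.Perm (Fin (m+m)), G π * φ^(NS π) *
         ∑ S ∈ Jᶜ.powerset, H ((sgn π ∩ J) ∪ S) := by
  classical
  have hfix : ∀ S ∈ Jᶜ.powerset,
      (∑ π : Equiv.Perm (Fin (m+m)), G π * φ^(NS π) * H (symmDiff (sgn π) S))
        = ∑ π : Equiv.Perm (Fin (m+m)), G π * φ^(NS π) * H (sgn π) := by
    intro S hS
    have hS' := Finset.mem_powerset.mp hS
    rw [← sum_gamma_mul S (fun π => G π * φ^(NS π) * H (sgn π))]
    apply Finset.sum_congr rfl; intro π _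
    rw [hG S hS' π, NS_gamma_mul, sgn_gamma_mul]
  have step1 : (2:ℝ)^(Jᶜ.card) * ∑ π : Equiv.Perm (Fin (m+m)), G π * φ^(NS π) * H (sgn π)
      = ∑ S ∈ Jᶜ.powerset, ∑ π : Equiv.Perm (Fin (m+m)),
          G π * φ^(NS π) * H (symmDiff (sgn π) S) := by
    rw [Finset.sum_congr rfl hfix, Finset.sum_const, Finset.card_powerset, nsmul_eq_mul]
    push_cast
    ring
  rw [step1, Finset.sum_comm]
  apply Finset.sum_congr rfl
  intro π _
  rw [← Finset.mul_sum]
  congr 1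
  apply Finset.sum_nbij' (fun S => symmDiff (sgn π ∩ Jᶜ) S) (fun S => symmDiff (sgn π ∩ Jᶜ) S)
  · intro S hS
    simp only [Finset.mem_powerset] at hS ⊢
    intro x hx
    rw [Finset.mem_symmDiff] at hx
    rcases hx with ⟨h1, _⟩ | ⟨h1, _⟩
    · exact (Finset.mem_inter.mp h1).2
    · exact hS h1
  · intro S hS
    simp only [Finset.mem_powerset] at hS ⊢
    intro x hx
    rw [Finset.mem_symmDiff] at hx
    rcases hx with ⟨h1, _⟩ | ⟨h1, _⟩
    · exact (Finset.mem_inter.mp h1).2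
    · exact hS h1
  · intro S _
    exact symmDiff_symmDiff_cancel_left _ _
  · intro S _
    exact symmDiff_symmDiff_cancel_left _ _
  · intro S hS
    simp only [Finset.mem_powerset] at hS
    congr 1
    ext x
    have hx : x ∈ S → x ∉ J := fun h => Finset.mem_compl.mp (hS h)
    simp only [Finset.mem_symmDiff, Finset.mem_union, Finset.mem_inter, Finset.mem_compl]
    by_cases hj : x ∈ J <;> tauto

lemma sum_powerset_pow_sub {α : Type*} [DecidableEq α] (s : Finset α) (x : ℝ) :
    ∑ t ∈ s.powerset, x^(s.card - t.card) = (1+x)^s.card := by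
  classical
  have h := Finset.prod_add (fun _ : α => (1:ℝ)) (fun _ : α => x) s
  simp only [Finset.prod_const_one, Finset.prod_const, one_mul] at h
  rw [h]
  apply Finset.sum_congr rfl
  intro t ht
  rw [Finset.card_sdiff_of_subset (Finset.mem_powerset.mp ht)]

lemma sum_powerset_pow {α : Type*} [DecidableEq α] (s : Finset α) (x : ℝ) :
    ∑ t ∈ s.powerset, x^(t.card) = (1+x)^s.card := by
  classical
  have h := Finset.prod_add (fun _ : α => x) (fun _ : α => (1:ℝ)) s
  simp only [Finset.prod_const_one, Finset.prod_const, mul_one] at h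
  rw [← h]
  ring

/-- collapse a powerset sum of a card-function to a binomial sum -/
lemma sum_powerset_card_fun {α : Type*} [DecidableEq α] (s : Finset α) (g : ℕ → ℝ) :
    ∑ t ∈ s.powerset, g t.card
      = ∑ k ∈ Finset.range (s.card + 1), (s.card.choose k : ℝ) * g k := by
  classical
  rw [Finset.sum_powerset]
  apply Finset.sum_congr rfl
  intro k _
  rw [Finset.sum_powersetCard k s g, nsmul_eq_mul]

variable {φ : ℝ}

/-- base-measure normalization -/
noncomputable def Wq (m : ℕ) (φ : ℝ) : ℝ := ∑ π : Equiv.Perm (Fin (m+m)), φ^(NS π)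

lemma key_avg_univ (H : Finset (Fin m) → ℝ) :
    (2:ℝ)^m * ∑ π : Equiv.Perm (Fin (m+m)), φ^(NS π) * H (sgn π)
      = Wq m φ * ∑ V ∈ (Finset.univ : Finset (Fin m)).powerset, H V := by
  have h := key_avg φ (∅ : Finset (Fin m)) (fun _ => (1:ℝ)) (fun _ _ _ => rfl) H
  simp only [Finset.compl_empty, one_mul, Finset.inter_empty, Finset.empty_union,
    Finset.card_univ, Fintype.card_fin] at h
  rw [h, Wq, Finset.sum_mul]

lemma Z_eq : (2:ℝ)^m * ∑ π : Equiv.Perm (Fin (m+m)), φ^(dKT π 1)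
    = Wq m φ * (1+φ)^m := by
  have h := key_avg_univ (m := m) (φ := φ) (fun V => φ^(m - V.card))
  have h2 : ∀ π : Equiv.Perm (Fin (m+m)), φ^(NS π) * φ^(m - (sgn π).card) = φ^(dKT π 1) := by
    intro π
    rw [← pow_add, dKT_one]; rfl
  rw [Finset.sum_congr rfl (fun π _ => h2 π)] at h
  rw [h]
  congr 1
  have := sum_powerset_pow_sub (Finset.univ : Finset (Fin m)) φ
  simp only [Finset.card_univ, Fintype.card_fin] at this
  exact this

lemma Ztau_eq_Z : ∑ π : Equiv.Perm (Fin (m+m)), φ^(dKT π (tauP m))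
    = ∑ π : Equiv.Perm (Fin (m+m)), φ^(dKT π 1) := by
  rw [← sum_gamma_mul (Finset.univ) (fun π => φ^(dKT π (tauP m)))]
  apply Finset.sum_congr rfl
  intro π _
  have hX : Xc (gamma Finset.univ * π) = m - Xc π := by
    rw [Xc, sgn_gamma_mul]
    have : symmDiff (sgn π) (Finset.univ : Finset (Fin m)) = (sgn π)ᶜ := by
      ext x; simp [Finset.mem_symmDiff]
    rw [this, Finset.card_compl, Fintype.card_fin]
    rfl
  rw [dKT_tau, dKT_one, NS_gamma_mul, hX]

lemma lower_master (k₀ : ℕ) :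
    (2:ℝ)^m * ∑ π : Equiv.Perm (Fin (m+m)),
        (if k₀ ≤ Xc π then φ^(dKT π 1) - φ^(dKT π (tauP m)) else 0)
      = Wq m φ * ∑ k ∈ Finset.range (m + 1),
          (m.choose k : ℝ) * (if k₀ ≤ k then φ^(m-k) - φ^k else 0) := by
  have h := key_avg_univ (m := m) (φ := φ)
    (fun V => if k₀ ≤ V.card then φ^(m - V.card) - φ^(V.card) else 0)
  have h2 : ∀ π : Equiv.Perm (Fin (m+m)),
      φ^(NS π) * (if k₀ ≤ (sgn π).card then φ^(m - (sgn π).card) - φ^((sgn π).card) else 0)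
        = (if k₀ ≤ Xc π then φ^(dKT π 1) - φ^(dKT π (tauP m)) else 0) := by
    intro π
    simp only [dKT_one, dKT_tau, Xc]
    split
    · rw [mul_sub, ← pow_add, ← pow_add]
    · rw [mul_zero]
  rw [Finset.sum_congr rfl (fun π _ => h2 π)] at h
  rw [h]
  congr 1
  have := sum_powerset_card_fun (Finset.univ : Finset (Fin m))
    (fun k => if k₀ ≤ k then φ^(m-k) - φ^k else 0)
  simp only [Finset.card_univ, Fintype.card_fin] at this
  rw [this]

lemma pattern_gamma_mul {K : ℕ} (T : Finset (Fin (m+m))) (hT : T.card = K)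
    (S : Finset (Fin m)) (hS : S ⊆ (T.image blk)ᶜ) (π : Equiv.Perm (Fin (m+m))) :
    inducedPattern T hT (gamma S * π) = inducedPattern T hT π := by
  funext a b
  unfold inducedPattern
  have key : ∀ x : Fin (m+m), x ∈ T → (gamma S * π).symm x = π.symm x := by
    intro x hx
    rw [mul_symm_apply, gamma_symm, gamma_apply_not_mem]
    intro hmem
    exact (Finset.mem_compl.mp (hS hmem)) (Finset.mem_image_of_mem blk hx)
  rw [key _ (T.orderIsoOfFin hT a).2, key _ (T.orderIsoOfFin hT b).2]

/-- pointwise bound |φ^(j-x) - φ^x| ≤ (φ⁻¹^j - 1) * φ^(j-x) -/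
lemma pointwise_bound (hφ0 : 0 < φ) (hφ1 : φ ≤ 1) {j x : ℕ} (hx : x ≤ j) :
    |φ^(j-x) - φ^x| ≤ (φ⁻¹^j - 1) * φ^(j-x) := by
  have hφx : (0:ℝ) < φ^x := pow_pos hφ0 x
  rw [← mul_le_mul_iff_of_pos_right hφx]
  have e1 : |φ^(j-x) - φ^x| * φ^x = |φ^(j-x) * φ^x - φ^x * φ^x| := by
    rw [← abs_of_pos hφx, ← abs_mul, sub_mul, abs_of_pos hφx]
  have e2 : φ^(j-x) * φ^x = φ^j := by rw [← pow_add]; congr 1; omega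
  have e3 : φ^x * φ^x = φ^(2*x) := by rw [← pow_add]; congr 1; omega
  have e4 : (φ⁻¹^j - 1) * φ^(j-x) * φ^x = 1 - φ^j := by
    rw [mul_assoc, e2, sub_mul, one_mul, ← mul_pow, inv_mul_cancel₀ (ne_of_gt hφ0), one_pow]
  rw [e1, e2, e3, e4]
  rw [abs_le]
  constructor
  · have h2x : φ^(2*x) ≤ 1 := pow_le_one₀ (le_of_lt hφ0) hφ1
    have hj2 : φ^(2*j) ≤ φ^(2*x) := pow_le_pow_of_le_one (le_of_lt hφ0) hφ1 (by omega)
    have sq : (1 - φ^j)^2 ≥ 0 := sq_nonneg _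
    nlinarith [pow_le_one₀ (le_of_lt hφ0) hφ1 (n := j), pow_pos hφ0 j,
      (by rw [← pow_mul] : (φ^j)^2 = φ^(j*2))]
  · have hj2 : φ^(2*j) ≤ φ^(2*x) := pow_le_pow_of_le_one (le_of_lt hφ0) hφ1 (by omega)
    nlinarith [sq_nonneg (1 - φ^j), (by rw [← pow_mul] : (φ^j)^2 = φ^(j*2)),
      (by ring_nf : φ^(j*2) = φ^(2*j))]

lemma filter_mem_univ_eq {α : Type*} [Fintype α] [DecidableEq α] (J : Finset α) :
    Finset.univ.filter (fun i => i ∈ J) = J := by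
  ext x; simp

lemma sum_powerset_pow_inter (J : Finset (Fin m)) (x : ℝ) :
    ∑ V ∈ (Finset.univ : Finset (Fin m)).powerset, x^(J.card - (V ∩ J).card)
      = (1+x)^(J.card) * 2^(Jᶜ.card) := by
  classical
  have hcard : ∀ V : Finset (Fin m), J.card - (V ∩ J).card = (J \ V).card := by
    intro V
    have h := Finset.card_inter_add_card_sdiff J V
    rw [Finset.inter_comm]
    omega
  have hstep : ∀ V ∈ (Finset.univ : Finset (Fin m)).powerset,
      x^(J.card - (V ∩ J).card)
        = (∏ i ∈ V, (1:ℝ)) * ∏ i ∈ Finset.univ \ V, (if i ∈ J then x else 1) := by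
    intro V _
    have hinter : (Finset.univ \ V) ∩ J = J \ V := by
      ext y; simp [Finset.mem_sdiff]; tauto
    rw [Finset.prod_const_one, one_mul, Finset.prod_ite_mem, hinter, Finset.prod_const, hcard]
  rw [Finset.sum_congr rfl hstep, ← Finset.prod_add]
  have hsplit : ∀ i ∈ (Finset.univ : Finset (Fin m)),
      (1:ℝ) + (if i ∈ J then x else 1) = (if i ∈ J then 1+x else 2) := by
    intro i _; split <;> norm_num
  have hcompl : Finset.univ.filter (fun i : Fin m => ¬ i ∈ J) = Jᶜ := by
    ext y; simp
  rw [Finset.prod_congr rfl hsplit, Finset.prod_ite, Finset.prod_const, Finset.prod_const,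
    filter_mem_univ_eq, hcompl]

lemma Z_pos (hφ0 : 0 < φ) : (0:ℝ) < ∑ σ : Equiv.Perm (Fin (m+m)), φ^(dKT σ 1) :=
  Finset.sum_pos (fun i _ => pow_pos hφ0 _) ⟨1, Finset.mem_univ 1⟩



/-- the induced TV bound -/
lemma induced_bound {K : ℕ} (hφ0 : 0 < φ) (hφ1 : φ ≤ 1)
    (T : Finset (Fin (m+m))) (hT : T.card = K) :
    inducedTV φ 1 (tauP m) T hT ≤ (φ⁻¹^K - 1) / 2 := by
  classical
  set J : Finset (Fin m) := T.image blk with hJ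
  set j := J.card with hj
  set c := Jᶜ.card with hc
  have hjc : j + c = m := by
    rw [hj, hc]
    have := Finset.card_add_card_compl J
    simpa [Fintype.card_fin] using this
  have hjK : j ≤ K := by rw [hj, ← hT]; exact Finset.card_image_le
  set Z := ∑ σ : Equiv.Perm (Fin (m+m)), φ^(dKT σ 1) with hZdef
  have hZ : 0 < Z := Z_pos hφ0
  have hψ1 : (1:ℝ) ≤ φ⁻¹ := (one_le_inv₀ hφ0).mpr hφ1
  -- the un-normalized per-pattern difference
  set E : (Fin K → Fin K → Bool) → ℝ := fun f =>
    ∑ π : Equiv.Perm (Fin (m+m)),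
      (if inducedPattern T hT π = f then (1:ℝ) else 0) * (φ^(NS π) *
        (φ^(m - Xc π) - φ^(Xc π))) with hE
  -- Step A : inducedTV = (∑ |E f|) / (2 Z)
  have stepA : inducedTV φ 1 (tauP m) T hT = (∑ f : Fin K → Fin K → Bool, |E f|) / (2*Z) := by
    rw [inducedTV]
    rw [div_eq_div_iff (by norm_num) (by positivity)]
    rw [Finset.sum_mul, Finset.sum_mul]
    apply Finset.sum_congr rfl
    intro f _
    have h1 : ∀ π : Equiv.Perm (Fin (m+m)),
        (if inducedPattern T hT π = f then mallowsPMF φ 1 π else 0)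
          - (if inducedPattern T hT π = f then mallowsPMF φ (tauP m) π else 0)
        = ((if inducedPattern T hT π = f then (1:ℝ) else 0) * (φ^(NS π) *
            (φ^(m - Xc π) - φ^(Xc π)))) / Z := by
      intro π
      have hm1 : mallowsPMF φ 1 π = φ^(dKT π 1)/Z := by rw [mallowsPMF, hZdef]
      have hmτ : mallowsPMF φ (tauP m) π = φ^(dKT π (tauP m))/Z := by
        rw [mallowsPMF, hZdef, Ztau_eq_Z]
      rw [hm1, hmτ]
      split
      · rw [one_mul, dKT_one, dKT_tau, pow_add, pow_add, mul_sub, sub_div]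
      · simp
    rw [← Finset.sum_sub_distrib, Finset.sum_congr rfl (fun π _ => h1 π),
      ← Finset.sum_div]
    rw [show (∑ π : Equiv.Perm (Fin (m+m)),
      (if inducedPattern T hT π = f then (1:ℝ) else 0) * (φ^(NS π) *
        (φ^(m - Xc π) - φ^(Xc π)))) = E f from rfl]
    rw [abs_div, abs_of_pos hZ]
    field_simp
  rw [stepA]
  -- Step B : ∑ |E f| ≤ (φ⁻¹^j - 1) * Z
  have stepB : (∑ f : Fin K → Fin K → Bool, |E f|) ≤ (φ⁻¹^j - 1) * Z := by
    -- apply key averaging per f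
    have hkey : ∀ f, (2:ℝ)^c * E f = ∑ π : Equiv.Perm (Fin (m+m)),
        (if inducedPattern T hT π = f then (1:ℝ) else 0) * φ^(NS π) *
          ((1+φ)^c * (φ^(j - (sgn π ∩ J).card) - φ^((sgn π ∩ J).card))) := by
      intro f
      have hG : ∀ S ⊆ Jᶜ, ∀ π : Equiv.Perm (Fin (m+m)),
          (if inducedPattern T hT (gamma S * π) = f then (1:ℝ) else 0)
            = (if inducedPattern T hT π = f then (1:ℝ) else 0) := by
        intro S hS π
        rw [pattern_gamma_mul T hT S hS π]
      have h := key_avg φ J (fun π => if inducedPattern T hT π = f then (1:ℝ) else 0)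
        hG (fun V => φ^(m - V.card) - φ^(V.card))
      rw [← hc] at h
      have hEeq : E f = ∑ π : Equiv.Perm (Fin (m+m)),
          (if inducedPattern T hT π = f then (1:ℝ) else 0) * φ^(NS π) *
            (φ^(m - (sgn π).card) - φ^((sgn π).card)) := by
        rw [hE]
        apply Finset.sum_congr rfl
        intro π _
        rw [mul_assoc]
        rfl
      rw [hEeq, h]
      apply Finset.sum_congr rfl
      intro π _
      congr 1
      -- inner sum evaluation
      have hxj : (sgn π ∩ J).card ≤ j := Finset.card_le_card Finset.inter_subset_right
      have hdisj : ∀ S ∈ Jᶜ.powerset, ((sgn π ∩ J) ∪ S).card = (sgn π ∩ J).card + S.card := by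
        intro S hS
        apply Finset.card_union_of_disjoint
        have h1 : sgn π ∩ J ⊆ J := Finset.inter_subset_right
        have h2 : S ⊆ Jᶜ := Finset.mem_powerset.mp hS
        exact Disjoint.mono h1 h2 disjoint_compl_right
      set x := (sgn π ∩ J).card
      have hsum : ∀ S ∈ Jᶜ.powerset,
          φ^(m - ((sgn π ∩ J) ∪ S).card) - φ^(((sgn π ∩ J) ∪ S).card)
          = φ^(j-x) * φ^(c - S.card) - φ^x * φ^(S.card) := by
        intro S hS
        have hSc : S.card ≤ c := by
          rw [hc]; exact Finset.card_le_card (Finset.mem_powerset.mp hS)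
        rw [hdisj S hS, ← pow_add, ← pow_add]
        congr 2 <;> omega
      rw [Finset.sum_congr rfl hsum, Finset.sum_sub_distrib, ← Finset.mul_sum, ← Finset.mul_sum]
      have e1 : ∑ S ∈ Jᶜ.powerset, φ^(c - S.card) = (1+φ)^c := by
        have := sum_powerset_pow_sub (Jᶜ : Finset (Fin m)) φ
        rw [← hc] at this
        exact this
      have e2 : ∑ S ∈ Jᶜ.powerset, φ^(S.card) = (1+φ)^c := by
        have := sum_powerset_pow (Jᶜ : Finset (Fin m)) φ
        rw [← hc] at this
        exact this
      rw [e1, e2]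
      ring
    -- bound each term
    have hbound : ∀ f, |E f| ≤ (1+φ)^c * (φ⁻¹^j - 1) / 2^c *
        ∑ π : Equiv.Perm (Fin (m+m)),
          (if inducedPattern T hT π = f then (1:ℝ) else 0) * φ^(NS π) *
            φ^(j - (sgn π ∩ J).card) := by
      intro f
      have h2c : (0:ℝ) < 2^c := by positivity
      rw [div_mul_eq_mul_div, le_div_iff₀ h2c]
      have habs : |E f| * 2^c = |2^c * E f| := by
        rw [abs_mul, abs_of_pos h2c]; ring
      rw [habs, hkey f]
      calc |∑ π : Equiv.Perm (Fin (m+m)),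
          (if inducedPattern T hT π = f then (1:ℝ) else 0) * φ^(NS π) *
            ((1+φ)^c * (φ^(j - (sgn π ∩ J).card) - φ^((sgn π ∩ J).card)))|
          ≤ ∑ π : Equiv.Perm (Fin (m+m)),
            |(if inducedPattern T hT π = f then (1:ℝ) else 0) * φ^(NS π) *
              ((1+φ)^c * (φ^(j - (sgn π ∩ J).card) - φ^((sgn π ∩ J).card)))| :=
            Finset.abs_sum_le_sum_abs _ _
        _ ≤ ∑ π : Equiv.Perm (Fin (m+m)),
            (if inducedPattern T hT π = f then (1:ℝ) else 0) * φ^(NS π) *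
              ((1+φ)^c * ((φ⁻¹^j - 1) * φ^(j - (sgn π ∩ J).card))) := by
            apply Finset.sum_le_sum
            intro π _
            have hxj : (sgn π ∩ J).card ≤ j := Finset.card_le_card Finset.inter_subset_right
            have hd := pointwise_bound hφ0 hφ1 hxj
            have hx0 : (0:ℝ) ≤ (if inducedPattern T hT π = f then (1:ℝ) else 0) := by
              split <;> norm_num
            have hy0 : (0:ℝ) ≤ φ^(NS π) := pow_nonneg hφ0.le _
            have hc0 : (0:ℝ) ≤ (1+φ)^c := by positivity
            rw [abs_mul, abs_mul, abs_mul, abs_of_nonneg hx0, abs_of_nonneg hy0,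
              abs_of_nonneg hc0]
            apply mul_le_mul_of_nonneg_left _ (mul_nonneg hx0 hy0)
            exact mul_le_mul_of_nonneg_left hd hc0
        _ = (1+φ)^c * (φ⁻¹^j - 1) * ∑ π : Equiv.Perm (Fin (m+m)),
              (if inducedPattern T hT π = f then (1:ℝ) else 0) * φ^(NS π) *
                φ^(j - (sgn π ∩ J).card) := by
            rw [Finset.mul_sum]
            apply Finset.sum_congr rfl
            intro π _
            ring
    -- sum over patterns
    set R := ∑ π : Equiv.Perm (Fin (m+m)), φ^(NS π) * φ^(j - (sgn π ∩ J).card) with hR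
    have hswap : ∑ f : Fin K → Fin K → Bool, (∑ π : Equiv.Perm (Fin (m+m)),
        (if inducedPattern T hT π = f then (1:ℝ) else 0) * φ^(NS π) *
          φ^(j - (sgn π ∩ J).card)) = R := by
      rw [Finset.sum_comm, hR]
      apply Finset.sum_congr rfl
      intro π _
      rw [← Finset.sum_mul, ← Finset.sum_mul, Finset.sum_ite_eq, if_pos (Finset.mem_univ _),
        one_mul]
    have hReval : (1+φ)^c * (φ⁻¹^j - 1) / 2^c * R = (φ⁻¹^j - 1) * Z := by
      have h2m : ((2:ℝ)^m) ≠ 0 := by positivity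
      apply mul_left_cancel₀ h2m
      have hkeyR := key_avg_univ (m := m) (φ := φ) (fun V => φ^(j - (V ∩ J).card))
      have hpows := sum_powerset_pow_inter J φ
      rw [← hj, ← hc] at hpows
      have hZe := Z_eq (m := m) (φ := φ)
      rw [← hZdef] at hZe
      calc (2:ℝ)^m * ((1+φ)^c * (φ⁻¹^j - 1) / 2^c * R)
          = (1+φ)^c * (φ⁻¹^j - 1) / 2^c * ((2:ℝ)^m * R) := by ring
        _ = (1+φ)^c * (φ⁻¹^j - 1) / 2^c * (Wq m φ * ((1+φ)^j * 2^c)) := by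
            rw [hkeyR, hpows]
        _ = (φ⁻¹^j - 1) * ((1+φ)^c * (1+φ)^j * Wq m φ) := by
            field_simp
        _ = (φ⁻¹^j - 1) * ((1+φ)^m * Wq m φ) := by
            rw [← pow_add, show c + j = m from by rw [Nat.add_comm c j]; exact hjc]
        _ = (2:ℝ)^m * ((φ⁻¹^j - 1) * Z) := by
            rw [mul_comm ((1+φ)^m) (Wq m φ), ← hZe]; ring
    calc ∑ f : Fin K → Fin K → Bool, |E f|
        ≤ ∑ f : Fin K → Fin K → Bool, (1+φ)^c * (φ⁻¹^j - 1) / 2^c *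
            (∑ π : Equiv.Perm (Fin (m+m)),
              (if inducedPattern T hT π = f then (1:ℝ) else 0) * φ^(NS π) *
                φ^(j - (sgn π ∩ J).card)) := Finset.sum_le_sum (fun f _ => hbound f)
      _ = (1+φ)^c * (φ⁻¹^j - 1) / 2^c * R := by rw [← Finset.mul_sum, hswap]
      _ = (φ⁻¹^j - 1) * Z := hReval
  -- conclude
  have hZ2 : (0:ℝ) < 2*Z := by linarith
  have hpow : φ⁻¹^j ≤ φ⁻¹^K := pow_le_pow_right₀ hψ1 hjK
  calc (∑ f : Fin K → Fin K → Bool, |E f|) / (2*Z)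
      ≤ ((φ⁻¹^j - 1) * Z) / (2*Z) := by
        exact div_le_div_of_nonneg_right stepB hZ2.le
      _ = (φ⁻¹^j - 1) / 2 := by
        rw [mul_comm (2:ℝ) Z, ← div_div]
        rw [mul_div_assoc, div_self (ne_of_gt hZ)]
        ring
      _ ≤ (φ⁻¹^K - 1) / 2 := by linarith







lemma bin_total (hm : True) : ∑ k ∈ Finset.range (m+1), (m.choose k : ℝ) * φ^(m-k)
    = (1+φ)^m := by
  have h := add_pow (1:ℝ) φ m
  rw [h]
  apply Finset.sum_congr rfl
  intro k _
  rw [one_pow, one_mul]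
  ring

lemma Wq_pos (hφ0 : 0 < φ) : (0:ℝ) < Wq m φ :=
  Finset.sum_pos (fun i _ => pow_pos hφ0 _) ⟨1, Finset.mem_univ 1⟩

/-- the TV lower bound master lemma -/
lemma tv_lower (hφ0 : 0 < φ) (hφ1 : φ ≤ 1) (k₀ r : ℕ)
    (h2k : m + r ≤ 2*k₀)
    (htail : (1+φ)^m / 4 ≤ ∑ k ∈ Finset.Ico k₀ (m+1), (m.choose k : ℝ) * φ^(m-k)) :
    (1 - φ^r)/8 ≤ tvDist (mallowsPMF φ (1 : Equiv.Perm (Fin (m+m)))) (mallowsPMF φ (tauP m)) := by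
  classical
  set Z := ∑ σ : Equiv.Perm (Fin (m+m)), φ^(dKT σ 1) with hZdef
  have hZ : 0 < Z := Z_pos hφ0
  have hW : 0 < Wq m φ := Wq_pos hφ0
  have h1φ : (0:ℝ) < (1+φ)^m := by positivity
  have hZe : (2:ℝ)^m * Z = Wq m φ * (1+φ)^m := Z_eq
  -- the binomial sum with indicator
  set Sb := ∑ k ∈ Finset.range (m + 1),
      (m.choose k : ℝ) * (if k₀ ≤ k then φ^(m-k) - φ^k else 0) with hSb
  have hSb_tail : (1 - φ^r) * ((1+φ)^m / 4) ≤ Sb := by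
    have hfil : (Finset.range (m+1)).filter (fun k => k₀ ≤ k) = Finset.Ico k₀ (m+1) := by
      ext k
      simp [Finset.mem_filter, Finset.mem_range, Finset.mem_Ico]
      omega
    have hrw : Sb = ∑ k ∈ Finset.Ico k₀ (m+1), (m.choose k : ℝ) * (φ^(m-k) - φ^k) := by
      rw [hSb, ← hfil, Finset.sum_filter]
      apply Finset.sum_congr rfl
      intro k _
      split
      · rfl
      · rw [mul_zero]
    rw [hrw]
    have hterm : ∀ k ∈ Finset.Ico k₀ (m+1),
        (1 - φ^r) * ((m.choose k : ℝ) * φ^(m-k)) ≤ (m.choose k : ℝ) * (φ^(m-k) - φ^k) := by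
      intro k hk
      rw [Finset.mem_Ico] at hk
      obtain ⟨hk1, hk2⟩ := hk
      have hkm : k ≤ m := by omega
      have hsplit : φ^k = φ^(m-k) * φ^(2*k - m) := by
        rw [← pow_add]
        congr 1
        omega
      have hpr : φ^(2*k-m) ≤ φ^r := pow_le_pow_of_le_one hφ0.le hφ1 (by omega)
      have h1 : (0:ℝ) ≤ (m.choose k : ℝ) := Nat.cast_nonneg _
      have h2 : (0:ℝ) ≤ φ^(m-k) := pow_nonneg hφ0.le _
      rw [hsplit]
      have h3 : (m.choose k:ℝ)*φ^(m-k)*φ^(2*k-m) ≤ (m.choose k:ℝ)*φ^(m-k)*φ^r :=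
        mul_le_mul_of_nonneg_left hpr (mul_nonneg h1 h2)
      nlinarith [h3]
    calc (1 - φ^r) * ((1+φ)^m / 4)
        ≤ (1 - φ^r) * ∑ k ∈ Finset.Ico k₀ (m+1), (m.choose k : ℝ) * φ^(m-k) := by
          apply mul_le_mul_of_nonneg_left htail
          have : φ^r ≤ 1 := pow_le_one₀ hφ0.le hφ1
          linarith
      _ = ∑ k ∈ Finset.Ico k₀ (m+1), (1 - φ^r) * ((m.choose k : ℝ) * φ^(m-k)) :=
          Finset.mul_sum _ _ _
      _ ≤ _ := Finset.sum_le_sum hterm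
  -- back to permutation sums
  have hmaster := lower_master (m := m) (φ := φ) k₀
  rw [← hSb] at hmaster
  set S := ∑ π : Equiv.Perm (Fin (m+m)),
      (if k₀ ≤ Xc π then φ^(dKT π 1) - φ^(dKT π (tauP m)) else 0) with hS
  have hSval : S * (1+φ)^m = Sb * Z := by
    have h2m : ((2:ℝ)^m) ≠ 0 := by positivity
    apply mul_left_cancel₀ h2m
    calc (2:ℝ)^m * (S * (1+φ)^m) = ((2:ℝ)^m * S) * (1+φ)^m := by ring
      _ = Wq m φ * Sb * (1+φ)^m := by rw [hmaster]
      _ = (Wq m φ * (1+φ)^m) * Sb := by ring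
      _ = ((2:ℝ)^m * Z) * Sb := by rw [← hZe]
      _ = (2:ℝ)^m * (Sb * Z) := by ring
  -- tvDist bound
  rw [tvDist]
  have hpq : ∀ π : Equiv.Perm (Fin (m+m)),
      mallowsPMF φ (1 : Equiv.Perm (Fin (m+m))) π - mallowsPMF φ (tauP m) π
      = (φ^(dKT π 1) - φ^(dKT π (tauP m))) / Z := by
    intro π
    rw [mallowsPMF, mallowsPMF, Ztau_eq_Z, ← hZdef, div_sub_div_same]
  have hstep : S / Z ≤ ∑ π : Equiv.Perm (Fin (m+m)),
      |mallowsPMF φ (1 : Equiv.Perm (Fin (m+m))) π - mallowsPMF φ (tauP m) π| := by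
    rw [hS, Finset.sum_div]
    apply Finset.sum_le_sum
    intro π _
    rw [hpq π]
    split
    · exact le_abs_self _
    · rw [zero_div]
      exact abs_nonneg _
  have hSZ : (1 - φ^r)/4 ≤ S / Z := by
    rw [le_div_iff₀ hZ]
    nlinarith [hSval, mul_le_mul_of_nonneg_right hSb_tail hZ.le, h1φ]
  linarith [hstep, hSZ]

lemma refl_term (hφ0 : 0 < φ) (hφ1 : φ ≤ 1) {k : ℕ} (hk : 2*k ≤ m) :
    (m.choose k : ℝ)*φ^(m-k) ≤ (m.choose (m-k) : ℝ)*φ^(m-(m-k)) := by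
  have hkm : k ≤ m := by omega
  rw [Nat.choose_symm hkm, show m - (m-k) = k from by omega]
  apply mul_le_mul_of_nonneg_left _ (Nat.cast_nonneg _)
  exact pow_le_pow_of_le_one hφ0.le hφ1 (by omega)

lemma sum_reflect (f : ℕ → ℝ) {A : ℕ} (hA : A ≤ m+1) :
    ∑ k ∈ Finset.Ico 0 A, f (m-k) = ∑ k ∈ Finset.Ico (m+1-A) (m+1), f k := by
  apply Finset.sum_nbij' (fun k => m - k) (fun k => m - k)
  · intro k hk
    rw [Finset.mem_Ico] at hk ⊢
    omega
  · intro k hk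
    rw [Finset.mem_Ico] at hk ⊢
    omega
  · intro k hk
    rw [Finset.mem_Ico] at hk
    omega
  · intro k hk
    rw [Finset.mem_Ico] at hk
    omega
  · intro k _
    rfl

lemma mid_term (hφ0 : 0 < φ) (hφ1 : φ ≤ 1) {l : ℕ} (hl : 1 ≤ l) :
    (((2*l).choose l : ℝ))*φ^l ≤ (1+φ)^(2*l)/2 := by
  obtain ⟨l', rfl⟩ : ∃ l', l = l' + 1 := ⟨l - 1, by omega⟩
  have hnat : ((2*(l'+1)).choose (l'+1)) ≤ 2^(2*l'+1) := by
    have h1 : (2*(l'+1)) = (2*l'+1) + 1 := by omega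
    rw [h1, Nat.choose_succ_succ]
    have h2 : (2*l'+1).choose (l'+1) = (2*l'+1).choose l' := by
      have := Nat.choose_symm (n := 2*l'+1) (k := l'+1) (by omega)
      rw [show 2*l'+1 - (l'+1) = l' from by omega] at this
      omega
    have h3 : (2*l'+1).choose l' ≤ 4^l' := Nat.choose_middle_le_pow l'
    have h4 : (4:ℕ)^l' = 2^(2*l') := by
      rw [show (4:ℕ) = 2^2 from rfl, ← pow_mul]
    calc (2*l'+1).choose l' + (2*l'+1).choose (l'+1)
        = (2*l'+1).choose l' + (2*l'+1).choose l' := by rw [h2]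
      _ ≤ 4^l' + 4^l' := by omega
      _ = 2^(2*l'+1) := by rw [h4]; ring
  have hreal : ((2*(l'+1)).choose (l'+1) : ℝ) ≤ 2^(2*l'+1) := by
    calc ((2*(l'+1)).choose (l'+1) : ℝ) ≤ ((2^(2*l'+1) : ℕ) : ℝ) := Nat.cast_le.mpr hnat
      _ = 2^(2*l'+1) := by push_cast; ring
  have hbase : φ ≤ ((1+φ)/2)^2 := by nlinarith [sq_nonneg (1-φ)]
  have hpow : φ^(l'+1) ≤ ((1+φ)/2)^(2*(l'+1)) := by
    calc φ^(l'+1) ≤ (((1+φ)/2)^2)^(l'+1) := pow_le_pow_left₀ hφ0.le hbase (l'+1)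
      _ = ((1+φ)/2)^(2*(l'+1)) := by rw [← pow_mul]
  have hfin : (2:ℝ)^(2*l'+1) * ((1+φ)/2)^(2*(l'+1)) = (1+φ)^(2*(l'+1))/2 := by
    rw [div_pow]
    rw [show (2*(l'+1)) = (2*l'+1) + 1 from by omega]
    field_simp
    ring
  calc (((2*(l'+1)).choose (l'+1) : ℝ))*φ^(l'+1)
      ≤ (2:ℝ)^(2*l'+1) * ((1+φ)/2)^(2*(l'+1)) := by
        apply mul_le_mul hreal hpow (pow_nonneg hφ0.le _) (by positivity)
    _ = (1+φ)^(2*(l'+1))/2 := hfin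

lemma tail_quarter (hφ0 : 0 < φ) (hφ1 : φ ≤ 1) (hm : 1 ≤ m) :
    (1+φ)^m/4 ≤ ∑ k ∈ Finset.Ico (m/2+1) (m+1), (m.choose k : ℝ)*φ^(m-k) := by
  classical
  set a : ℕ → ℝ := fun k => (m.choose k : ℝ)*φ^(m-k) with ha
  set k₀ := m/2 + 1 with hk₀
  set T := ∑ k ∈ Finset.Ico k₀ (m+1), a k with hT
  have hTnn : 0 ≤ T := Finset.sum_nonneg (fun k _ => by positivity)
  have htotal : ∑ k ∈ Finset.Ico 0 (m+1), a k = (1+φ)^m := by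
    rw [← Finset.range_eq_Ico]
    exact bin_total trivial
  have hsplit : ∑ k ∈ Finset.Ico 0 (m+1), a k
      = ∑ k ∈ Finset.Ico 0 (m+1-k₀), a k + ∑ k ∈ Finset.Ico (m+1-k₀) (m+1), a k :=
    (Finset.sum_Ico_consecutive a (by omega) (by omega)).symm
  have hpart1 : ∑ k ∈ Finset.Ico 0 (m+1-k₀), a k ≤ T := by
    calc ∑ k ∈ Finset.Ico 0 (m+1-k₀), a k
        ≤ ∑ k ∈ Finset.Ico 0 (m+1-k₀), a (m-k) := by
          apply Finset.sum_le_sum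
          intro k hk
          rw [Finset.mem_Ico] at hk
          exact refl_term hφ0 hφ1 (by omega)
      _ = ∑ k ∈ Finset.Ico (m+1-(m+1-k₀)) (m+1), a k := sum_reflect a (by omega)
      _ = T := by rw [show m+1-(m+1-k₀) = k₀ from by omega]
  rcases Nat.even_or_odd m with he | ho
  · -- even case
    obtain ⟨l, rfl⟩ : ∃ l, m = 2*l := by
      obtain ⟨l, hl⟩ := he; exact ⟨l, by omega⟩
    have hl1 : 1 ≤ l := by omega
    have hmid : a (2*l/2) ≤ (1+φ)^(2*l)/2 := by
      rw [show 2*l/2 = l from by omega, ha]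
      simp only [show 2*l - l = l from by omega]
      exact mid_term hφ0 hφ1 hl1
    have hpart2 : ∑ k ∈ Finset.Ico (2*l+1-k₀) (2*l+1), a k = a (2*l/2) + T := by
      rw [show 2*l+1-k₀ = 2*l/2 from by omega]
      rw [Finset.sum_eq_sum_Ico_succ_bot (by omega : 2*l/2 < 2*l+1) a]
    rw [hsplit, hpart2] at htotal
    linarith
  · -- odd case
    obtain ⟨l, hl⟩ := ho
    have hpart2 : ∑ k ∈ Finset.Ico (m+1-k₀) (m+1), a k = T := by
      rw [show m+1-k₀ = k₀ from by omega]
    rw [hsplit, hpart2] at htotal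
    linarith

lemma choose_ratio (ρ : ℝ) (hρ0 : 0 ≤ ρ) {B : ℕ} (hB : B ≤ m)
    (hρ : ∀ k, k < B → ρ * ((k:ℝ)+1) ≤ ((m:ℝ) - (k:ℝ))) :
    ∀ d k, k + d ≤ B → ρ^d * ((m.choose k : ℝ)) ≤ (m.choose (k+d) : ℝ) := by
  intro d
  induction d with
  | zero => intro k _; simp
  | succ d ih =>
    intro k hkd
    have h1 : ρ^d * (m.choose k : ℝ) ≤ (m.choose (k+d) : ℝ) := ih k (by omega)
    have hlt : k + d < B := by omega
    have hid := Nat.choose_succ_right_eq m (k+d)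
    have hidR : (m.choose (k+d+1):ℝ) * (((k+d:ℕ):ℝ) + 1)
        = (m.choose (k+d):ℝ) * ((m:ℝ) - ((k+d:ℕ):ℝ)) := by
      have hcast := congrArg (fun x : ℕ => (x:ℝ)) hid
      push_cast [Nat.cast_sub (show (k+d) ≤ m by omega)] at hcast
      convert hcast using 2 <;> push_cast <;> ring
    have hpos : (0:ℝ) < ((k+d:ℕ):ℝ) + 1 := by positivity
    have hstep : ρ * (m.choose (k+d) : ℝ) ≤ (m.choose (k+d+1) : ℝ) := by
      rw [← mul_le_mul_iff_of_pos_right hpos]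
      calc ρ * (m.choose (k+d):ℝ) * (((k+d:ℕ):ℝ)+1)
          = (ρ * (((k+d:ℕ):ℝ)+1)) * (m.choose (k+d):ℝ) := by ring
        _ ≤ ((m:ℝ) - ((k+d:ℕ):ℝ)) * (m.choose (k+d):ℝ) := by
            apply mul_le_mul_of_nonneg_right _ (Nat.cast_nonneg _)
            have := hρ (k+d) hlt
            push_cast at this ⊢
            linarith
        _ = (m.choose (k+d+1):ℝ) * (((k+d:ℕ):ℝ)+1) := by rw [hidR]; ring
    calc ρ^(d+1) * (m.choose k : ℝ) = ρ * (ρ^d * (m.choose k : ℝ)) := by ring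
      _ ≤ ρ * (m.choose (k+d) : ℝ) := mul_le_mul_of_nonneg_left h1 hρ0
      _ ≤ (m.choose (k+d+1) : ℝ) := hstep
      _ = (m.choose (k+(d+1)) : ℝ) := by rw [show k+(d+1) = k+d+1 from by omega]

lemma tail_quarter_big (hφ0 : 0 < φ) (hφ1 : φ ≤ 1) {u : ℕ} (hm : 1600 ≤ m)
    (hu3 : 3 ≤ u) (hu2 : 1600*(u*u) ≤ 9*m) (hum : 1600*u ≤ 3*m) :
    (1+φ)^m/4 ≤ ∑ k ∈ Finset.Ico ((m+1)/2 + u) (m+1), (m.choose k : ℝ)*φ^(m-k) := by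
  classical
  set a : ℕ → ℝ := fun k => (m.choose k : ℝ)*φ^(m-k) with ha
  set k₀ := (m+1)/2 + u with hk₀
  set B := k₀ + 4*u with hB
  have hBm : B ≤ m := by omega
  have hBpos : 0 < B := by omega
  have hBposR : (0:ℝ) < (B:ℝ) := by positivity
  have hBmR : (B:ℝ) ≤ (m:ℝ) := Nat.cast_le.mpr hBm
  have hmposR : (0:ℝ) < (m:ℝ) := by positivity
  set T := ∑ k ∈ Finset.Ico k₀ (m+1), a k with hT
  have hTnn : 0 ≤ T := Finset.sum_nonneg (fun k _ => by positivity)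
  set ρ : ℝ := ((m:ℝ) - B)/B with hρdef
  have hρ0 : 0 ≤ ρ := by
    apply div_nonneg _ hBposR.le
    linarith
  have hρcond : ∀ k, k < B → ρ * ((k:ℝ)+1) ≤ ((m:ℝ) - (k:ℝ)) := by
    intro k hk
    have hkB : (k:ℝ)+1 ≤ (B:ℝ) := by
      have : (k:ℕ)+1 ≤ B := hk
      exact_mod_cast this
    rw [hρdef, div_mul_eq_mul_div, div_le_iff₀ hBposR]
    nlinarith
  -- ρ^(4u) ≥ 1/2
  have hBleR : (B:ℝ) ≤ (m:ℝ)/2 + 5*(u:ℝ) + 1 := by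
    have : B ≤ (m+1)/2 + 5*u := by omega
    have h2 : ((m+1)/2 : ℕ) ≤ (m+1)/2 := le_refl _
    have h3 : ((((m+1)/2 + 5*u) : ℕ) : ℝ) ≤ (m:ℝ)/2 + 5*(u:ℝ) + 1 := by
      have h4 : ((m+1)/2 : ℕ) * 2 ≤ m + 1 := Nat.div_mul_le_self _ _
      push_cast
      have h5 : (((m+1)/2 : ℕ) : ℝ) ≤ ((m:ℝ)+1)/2 := by
        have := h4
        have h6 : (((m+1)/2 * 2 : ℕ) : ℝ) ≤ ((m+1 : ℕ) : ℝ) := Nat.cast_le.mpr h4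
        push_cast at h6
        linarith
      linarith
    calc (B:ℝ) ≤ ((((m+1)/2 + 5*u) : ℕ) : ℝ) := Nat.cast_le.mpr this
      _ ≤ (m:ℝ)/2 + 5*(u:ℝ) + 1 := h3
  have hBgeR : (m:ℝ)/2 ≤ (B:ℝ) := by
    have h : m ≤ 2*B := by omega
    have h2 := (Nat.cast_le (α := ℝ)).mpr h
    push_cast at h2
    linarith
  have humR : 22*(u:ℝ) ≤ (m:ℝ) := by
    have h : 1600*(22*u) ≤ 1600*m := by
      calc 1600*(22*u) = 22*(1600*u) := by ring
        _ ≤ 22*(3*m) := by omega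
        _ ≤ 1600*m := by omega
    have : 22*u ≤ m := by omega
    exact_mod_cast this
  have huR : (3:ℝ) ≤ (u:ℝ) := by exact_mod_cast hu3
  have hu2R : 1600*((u:ℝ)*(u:ℝ)) ≤ 9*(m:ℝ) := by exact_mod_cast hu2
  have hq0 : (0:ℝ) ≤ 1 - 22*(u:ℝ)/(m:ℝ) := by
    rw [sub_nonneg, div_le_one hmposR]
    linarith
  have hqρ : 1 - 22*(u:ℝ)/(m:ℝ) ≤ ρ := by
    have hfrac : 1 - 22*(u:ℝ)/(m:ℝ) = ((m:ℝ) - 22*(u:ℝ))/(m:ℝ) := by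
      field_simp
    rw [hfrac, hρdef, div_le_div_iff₀ hmposR hBposR]
    have p1 : (m:ℝ)*(B:ℝ) ≤ (m:ℝ)*((m:ℝ)/2 + 5*(u:ℝ) + 1) :=
      mul_le_mul_of_nonneg_left hBleR hmposR.le
    have p2 : 22*(u:ℝ)*((m:ℝ)/2) ≤ 22*(u:ℝ)*(B:ℝ) :=
      mul_le_mul_of_nonneg_left hBgeR (by positivity)
    have p3 : (0:ℝ) ≤ (m:ℝ)*((u:ℝ)-2) := mul_nonneg hmposR.le (by linarith)
    nlinarith
  have hρpow : (1:ℝ)/2 ≤ ρ^(4*u) := by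
    have h1 : (1 - 22*(u:ℝ)/(m:ℝ))^(4*u) ≤ ρ^(4*u) := pow_le_pow_left₀ hq0 hqρ _
    have h2 : 1 + (4*u:ℕ)*(-(22*(u:ℝ)/(m:ℝ))) ≤ (1 + (-(22*(u:ℝ)/(m:ℝ))))^(4*u) := by
      apply one_add_mul_le_pow
      have : 22*(u:ℝ)/(m:ℝ) ≤ 1 := by
        rw [div_le_one hmposR]; linarith
      linarith
    have h3 : (1:ℝ)/2 ≤ 1 + (4*u:ℕ)*(-(22*(u:ℝ)/(m:ℝ))) := by
      have h4 : 4*(u:ℝ)*(22*(u:ℝ)/(m:ℝ)) = 88*((u:ℝ)*(u:ℝ))/(m:ℝ) := by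
        field_simp
        ring
      have h5 : 88*((u:ℝ)*(u:ℝ))/(m:ℝ) ≤ 1/2 := by
        rw [div_le_iff₀ hmposR]
        linarith
      push_cast
      rw [mul_neg, ← sub_eq_add_neg, le_sub_iff_add_le]
      calc (1:ℝ)/2 + 4*(u:ℝ)*(22*(u:ℝ)/(m:ℝ)) = 1/2 + 88*((u:ℝ)*(u:ℝ))/(m:ℝ) := by rw [h4]
        _ ≤ 1/2 + 1/2 := by linarith
        _ = 1 := by norm_num
    calc (1:ℝ)/2 ≤ 1 + (4*u:ℕ)*(-(22*(u:ℝ)/(m:ℝ))) := h3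
      _ ≤ (1 + (-(22*(u:ℝ)/(m:ℝ))))^(4*u) := h2
      _ = (1 - 22*(u:ℝ)/(m:ℝ))^(4*u) := by ring_nf
      _ ≤ ρ^(4*u) := h1
  -- the shift bound
  have hshift : ∀ k ∈ Finset.Ico (k₀ - 4*u) k₀, a k ≤ 2 * a (k + 4*u) := by
    intro k hk
    rw [Finset.mem_Ico] at hk
    have hk4B : k + 4*u ≤ B := by omega
    have h1 : ρ^(4*u) * (m.choose k : ℝ) ≤ (m.choose (k+4*u) : ℝ) :=
      choose_ratio ρ hρ0 hBm hρcond (4*u) k hk4B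
    have h2 : (m.choose k : ℝ) ≤ 2 * (m.choose (k+4*u) : ℝ) := by
      nlinarith [Nat.cast_nonneg (α := ℝ) (m.choose k)]
    have h3 : φ^(m-k) ≤ φ^(m-(k+4*u)) :=
      pow_le_pow_of_le_one hφ0.le hφ1 (by omega)
    rw [ha]
    simp only
    calc (m.choose k : ℝ)*φ^(m-k) ≤ (2*(m.choose (k+4*u) : ℝ))*φ^(m-(k+4*u)) := by
          apply mul_le_mul h2 h3 (by positivity) (by positivity)
      _ = 2 * ((m.choose (k+4*u) : ℝ)*φ^(m-(k+4*u))) := by ring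
  have hmid : ∑ k ∈ Finset.Ico (k₀-4*u) k₀, a k ≤ 2 * T := by
    calc ∑ k ∈ Finset.Ico (k₀-4*u) k₀, a k
        ≤ ∑ k ∈ Finset.Ico (k₀-4*u) k₀, 2 * a (k+4*u) := Finset.sum_le_sum hshift
      _ = 2 * ∑ k ∈ Finset.Ico (k₀-4*u) k₀, a (k+4*u) := by rw [Finset.mul_sum]
      _ = 2 * ∑ k ∈ Finset.Ico k₀ (k₀+4*u), a k := by
          congr 1
          apply Finset.sum_nbij' (fun k => k + 4*u) (fun k => k - 4*u)
          · intro k hk; rw [Finset.mem_Ico] at hk ⊢; omega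
          · intro k hk; rw [Finset.mem_Ico] at hk ⊢; omega
          · intro k hk; rw [Finset.mem_Ico] at hk; omega
          · intro k hk; rw [Finset.mem_Ico] at hk; omega
          · intro k _; rfl
      _ ≤ 2 * T := by
          apply mul_le_mul_of_nonneg_left _ (by norm_num)
          apply Finset.sum_le_sum_of_subset_of_nonneg
          · apply Finset.Ico_subset_Ico (le_refl _)
            omega
          · intro k _ _
            positivity
  have hlow : ∑ k ∈ Finset.Ico 0 (k₀-4*u), a k ≤ T := by
    calc ∑ k ∈ Finset.Ico 0 (k₀-4*u), a k
        ≤ ∑ k ∈ Finset.Ico 0 (k₀-4*u), a (m-k) := by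
          apply Finset.sum_le_sum
          intro k hk
          rw [Finset.mem_Ico] at hk
          exact refl_term hφ0 hφ1 (by omega)
      _ = ∑ k ∈ Finset.Ico (m+1-(k₀-4*u)) (m+1), a k := sum_reflect a (by omega)
      _ ≤ T := by
          apply Finset.sum_le_sum_of_subset_of_nonneg
          · apply Finset.Ico_subset_Ico _ (le_refl _)
            omega
          · intro k _ _
            positivity
  have htotal : ∑ k ∈ Finset.Ico 0 (m+1), a k = (1+φ)^m := by
    rw [← Finset.range_eq_Ico]
    exact bin_total trivial
  have hsplit1 : ∑ k ∈ Finset.Ico 0 (m+1), a k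
      = ∑ k ∈ Finset.Ico 0 (k₀-4*u), a k + ∑ k ∈ Finset.Ico (k₀-4*u) (m+1), a k :=
    (Finset.sum_Ico_consecutive a (by omega) (by omega)).symm
  have hsplit2 : ∑ k ∈ Finset.Ico (k₀-4*u) (m+1), a k
      = ∑ k ∈ Finset.Ico (k₀-4*u) k₀, a k + T :=
    (Finset.sum_Ico_consecutive a (by omega) (by omega)).symm
  rw [hsplit1, hsplit2] at htotal
  linarith






lemma cast_sqrt_le (s m : ℕ) (h : s*s ≤ m) : (s:ℝ) ≤ Real.sqrt m := by
  rw [show ((s:ℝ)) = Real.sqrt ((s:ℝ)^2) from (Real.sqrt_sq (by positivity)).symm]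
  apply Real.sqrt_le_sqrt
  have h2 := (Nat.cast_le (α := ℝ)).mpr h
  push_cast at h2
  nlinarith

lemma sqrt_le_cast (s m : ℕ) (h : m ≤ (s+1)*(s+1)) : Real.sqrt m ≤ (s:ℝ)+1 := by
  rw [show ((s:ℝ)+1) = Real.sqrt (((s:ℝ)+1)^2) from (Real.sqrt_sq (by positivity)).symm]
  apply Real.sqrt_le_sqrt
  have h2 := (Nat.cast_le (α := ℝ)).mpr h
  push_cast at h2
  nlinarith

lemma sqrt_two_m_le (m : ℕ) : Real.sqrt ((m:ℝ)+(m:ℝ)) ≤ 2 * Real.sqrt m := by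
  rw [show (2:ℝ) * Real.sqrt m = Real.sqrt 4 * Real.sqrt m from by
    rw [show (4:ℝ) = 2^2 by norm_num, Real.sqrt_sq (by norm_num)]]
  rw [← Real.sqrt_mul (by norm_num)]
  apply Real.sqrt_le_sqrt
  nlinarith [Nat.cast_nonneg (α := ℝ) m]

lemma sqrt_le_sqrt_two_m (m : ℕ) : Real.sqrt m ≤ Real.sqrt ((m:ℝ)+(m:ℝ)) := by
  apply Real.sqrt_le_sqrt
  nlinarith [Nat.cast_nonneg (α := ℝ) m]

lemma aux_pow (x : ℝ) (hx0 : 0 ≤ x) (hx1 : x ≤ 1) (N : ℕ) :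
    (1 + (N:ℝ)*x)*(1-x)^N ≤ 1 := by
  have h1 : 1 + (N:ℝ)*x ≤ (1+x)^N := one_add_mul_le_pow (by linarith) N
  have h2 : (0:ℝ) ≤ (1-x)^N := pow_nonneg (by linarith) N
  calc (1 + (N:ℝ)*x)*(1-x)^N ≤ (1+x)^N*(1-x)^N := mul_le_mul_of_nonneg_right h1 h2
    _ = ((1+x)*(1-x))^N := (mul_pow _ _ _).symm
    _ ≤ 1 := by
        apply pow_le_one₀ (by nlinarith) (by nlinarith)

lemma aux_pow2 (a : ℝ) (ha0 : 0 ≤ a) (ha1 : a ≤ 1) (N : ℕ) :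
    (1+a)^N * (1 - (N:ℝ)*a) ≤ 1 := by
  rcases le_or_gt (1 - (N:ℝ)*a) 0 with h | h
  · have : (0:ℝ) ≤ (1+a)^N := pow_nonneg (by linarith) N
    nlinarith
  · have h1 : 1 - (N:ℝ)*a ≤ (1-a)^N := by
      have := one_add_mul_le_pow (show (-2:ℝ) ≤ -a by linarith) N
      calc 1 - (N:ℝ)*a = 1 + (N:ℝ)*(-a) := by ring
        _ ≤ (1+(-a))^N := this
        _ = (1-a)^N := by ring_nf
    have h2 : (0:ℝ) ≤ (1+a)^N := pow_nonneg (by linarith) N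
    calc (1+a)^N * (1 - (N:ℝ)*a) ≤ (1+a)^N * (1-a)^N := mul_le_mul_of_nonneg_left h1 h2
      _ = ((1+a)*(1-a))^N := (mul_pow _ _ _).symm
      _ ≤ 1 := pow_le_one₀ (by nlinarith) (by nlinarith)

lemma tvDist_nonneg {n : ℕ} (p q : Equiv.Perm (Fin n) → ℝ) : 0 ≤ tvDist p q := by
  rw [tvDist]
  apply div_nonneg _ (by norm_num)
  exact Finset.sum_nonneg (fun _ _ => abs_nonneg _)



set_option maxHeartbeats 1000000 in
/-- Global information is necessary. There is a universal constant
`c > 0` such that for every `0 < ε < 1`, `K ≥ 1` and even `n` with `√n ≤ K/ε`, there are a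
scaling parameter `0 < φ < 1` and permutations `π₀, σ₀` of `[n]` whose Mallows models are at
TV distance at least `c ε √n / K`, while for every `K`-element subset `T ⊆ [n]` the induced
distributions on `T` are `ε`-close in TV distance. -/
theorem local_indistinguishability :
    ∃ c : ℝ, 0 < c ∧
      ∀ (ε : ℝ) (K n : ℕ), 0 < ε → ε < 1 → 1 ≤ K → Even n →
        Real.sqrt (n : ℝ) ≤ (K : ℝ) / ε →
        ∃ (φ : ℝ) (π₀ σ₀ : Equiv.Perm (Fin n)), 0 < φ ∧ φ < 1 ∧
          c * ε * Real.sqrt (n : ℝ) / (K : ℝ) ≤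
            tvDist (mallowsPMF φ π₀) (mallowsPMF φ σ₀) ∧
          ∀ (T : Finset (Fin n)) (hT : T.card = K), inducedTV φ π₀ σ₀ T hT ≤ ε := by
  refine ⟨1/10000, by norm_num, ?_⟩
  intro ε K n hε0 hε1 hK hEven hsqrt
  obtain ⟨m, rfl⟩ := hEven
  have hK0 : (0:ℝ) < (K:ℝ) := by exact_mod_cast Nat.lt_of_lt_of_le Nat.zero_lt_one hK
  set t : ℝ := ε/(8*K) with ht
  have ht0 : 0 < t := by positivity
  have hK1 : (1:ℝ) ≤ (K:ℝ) := by exact_mod_cast hK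
  have ht18 : t ≤ 1/8 := by
    rw [ht, div_le_div_iff₀ (by positivity) (by norm_num)]
    nlinarith
  set φ : ℝ := (1-t)/(1+t) with hφ
  have h1t : (0:ℝ) < 1 + t := by linarith
  have hφ0 : 0 < φ := by
    apply div_pos (by linarith) h1t
  have hφ1 : φ < 1 := by
    rw [hφ, div_lt_one h1t]
    linarith
  have h1phi_ub : 1 - φ ≤ 2*t := by
    have h : 1 - 2*t ≤ (1-t)/(1+t) := by
      rw [le_div_iff₀ h1t]
      nlinarith
    rw [hφ]
    linarith
  have h1phi_lb : t ≤ 1 - φ := by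
    have h : (1-t)/(1+t) ≤ 1 - t := by
      rw [div_le_iff₀ h1t]
      nlinarith
    rw [hφ]
    linarith
  have hεK : ε * Real.sqrt ((m:ℝ)+(m:ℝ)) ≤ K := by
    have h2 : Real.sqrt ((m+m : ℕ):ℝ) ≤ (K:ℝ)/ε := hsqrt
    push_cast at h2
    calc ε * Real.sqrt ((m:ℝ)+(m:ℝ)) ≤ ε * ((K:ℝ)/ε) := by
          apply mul_le_mul_of_nonneg_left h2 hε0.le
      _ = K := by field_simp
  have hsqrtn_cast : Real.sqrt ((m+m : ℕ):ℝ) = Real.sqrt ((m:ℝ)+(m:ℝ)) := by push_cast; rfl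
  refine ⟨φ, 1, tauP m, hφ0, hφ1, ?_, ?_⟩
  · -- lower bound
    rcases Nat.lt_or_ge m 1 with hm0 | hm1
    · -- m = 0
      have hm : m = 0 := by omega
      subst hm
      have : Real.sqrt ((0+0 : ℕ):ℝ) = 0 := by norm_num
      rw [this]
      have h0 : (1:ℝ)/10000 * ε * 0 / K = 0 := by ring
      rw [h0]
      exact tvDist_nonneg _ _
    rcases Nat.lt_or_ge m 1600 with hsmall | hbig
    · -- small case
      have htail := tail_quarter (m := m) hφ0 hφ1.le hm1
      have htv := tv_lower (m := m) hφ0 hφ1.le (m/2+1) 1 (by omega) htail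
      have h1 : (1 - φ^1)/8 = (1-φ)/8 := by rw [pow_one]
      rw [h1] at htv
      have hsq : Real.sqrt ((m+m:ℕ):ℝ) ≤ 57 := by
        rw [show (57:ℝ) = Real.sqrt (57^2) from (Real.sqrt_sq (by norm_num)).symm]
        apply Real.sqrt_le_sqrt
        have hmc : ((m:ℝ)) ≤ 1599 := by exact_mod_cast (by omega : m ≤ 1599)
        push_cast
        nlinarith
      have e : t/8 = (ε/64)/K := by rw [ht]; ring
      calc (1:ℝ)/10000 * ε * Real.sqrt ((m+m:ℕ):ℝ) / K
          ≤ (ε/64)/K := by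
            apply div_le_div_of_nonneg_right _ hK0.le
            nlinarith [mul_le_mul_of_nonneg_left hsq (by positivity : (0:ℝ) ≤ 1/10000 * ε)]
        _ = t/8 := e.symm
        _ ≤ (1-φ)/8 := by linarith
        _ ≤ _ := htv
    · -- big case
      set s := Nat.sqrt m with hs
      have hs1 : s*s ≤ m := by
        have h := Nat.sqrt_le' m
        rw [pow_two] at h
        exact h
      have hs2 : m < (s+1)*(s+1) := by
        have h := Nat.lt_succ_sqrt' m
        rw [Nat.succ_eq_add_one, pow_two] at h
        exact h
      have hs40 : 40 ≤ s := Nat.le_sqrt'.mpr (by omega)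
      set u := s/20 + 1 with hu
      have hu3 : 3 ≤ u := by omega
      have h40u : 40*u ≤ 3*s := by omega
      have h40s : 40*s ≤ m := le_trans (Nat.mul_le_mul_right s hs40) hs1
      have hum : 1600*u ≤ 3*m := by omega
      have hu2 : 1600*(u*u) ≤ 9*m := by
        calc 1600*(u*u) = (40*u)*(40*u) := by ring
          _ ≤ (3*s)*(3*s) := Nat.mul_le_mul h40u h40u
          _ = 9*(s*s) := by ring
          _ ≤ 9*m := by omega
      have h20u : s + 1 ≤ 20*u := by omega
      clear_value s u
      clear hu hs
      have htail := tail_quarter_big (m := m) hφ0 hφ1.le hbig hu3 hu2 hum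
      have htv := tv_lower (m := m) hφ0 hφ1.le ((m+1)/2 + u) (2*u) (by omega) htail
      -- relate u and sqrt m
      have hsR : (s:ℝ) ≤ Real.sqrt m := cast_sqrt_le s m hs1
      have hsR2 : Real.sqrt m ≤ (s:ℝ)+1 := sqrt_le_cast s m (by omega)
      have huup : (u:ℝ) ≤ 3/40 * Real.sqrt m := by
        have h1 : ((40*u : ℕ):ℝ) ≤ ((3*s : ℕ):ℝ) := Nat.cast_le.mpr h40u
        push_cast at h1
        nlinarith
      have hulow : Real.sqrt m ≤ 20*(u:ℝ) := by
        have h2 : ((s+1 : ℕ):ℝ) ≤ ((20*u : ℕ):ℝ) := Nat.cast_le.mpr h20u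
        push_cast at h2
        linarith
      have hsqm_n : Real.sqrt m ≤ Real.sqrt ((m:ℝ)+(m:ℝ)) := sqrt_le_sqrt_two_m m
      have htsqrt : t * Real.sqrt ((m:ℝ)+(m:ℝ)) ≤ 1/8 := by
        rw [ht, div_mul_eq_mul_div, div_le_div_iff₀ (by positivity) (by norm_num)]
        nlinarith [hεK, hK0]
      -- 2u(1-φ) ≤ 1
      have hA0 : 0 ≤ (u:ℝ)*(1-φ) := by
        apply mul_nonneg (Nat.cast_nonneg _)
        linarith
      have h2A1 : 2*((u:ℝ)*(1-φ)) ≤ 1 := by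
        have h1 : (u:ℝ)*(1-φ) ≤ (3/40 * Real.sqrt m)*(2*t) := by
          apply mul_le_mul huup h1phi_ub (by linarith) (by positivity)
        have h2 : (3/40 * Real.sqrt m)*(2*t) = (3/20) * (t * Real.sqrt m) := by ring
        have h3 : t * Real.sqrt m ≤ t * Real.sqrt ((m:ℝ)+(m:ℝ)) :=
          mul_le_mul_of_nonneg_left hsqm_n ht0.le
        nlinarith
      -- 1 - φ^(2u) ≥ u(1-φ)
      have hexp : (u:ℝ)*(1-φ) ≤ 1 - φ^(2*u) := by
        have haux := aux_pow (1-φ) (by linarith) (by linarith) (2*u)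
        have heq : (1:ℝ) - (1-φ) = φ := by ring
        rw [heq] at haux
        have hφp : (0:ℝ) ≤ φ^(2*u) := pow_nonneg hφ0.le _
        have hc : ((2*u : ℕ):ℝ) = 2*(u:ℝ) := by push_cast; ring
        rw [hc] at haux
        nlinarith [haux, hA0, h2A1, hφp]
      -- final chain
      have hsn40 : Real.sqrt ((m:ℝ)+(m:ℝ)) ≤ 40*(u:ℝ) := by
        have h1 : Real.sqrt ((m:ℝ)+(m:ℝ)) ≤ 2 * Real.sqrt m := sqrt_two_m_le m
        linarith
      have hsn0 : (0:ℝ) ≤ Real.sqrt ((m:ℝ)+(m:ℝ)) := Real.sqrt_nonneg _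
      have h4 : Real.sqrt ((m:ℝ)+(m:ℝ)) * ε / (2560 * K) ≤ (u:ℝ)*t/8 := by
        have e1 : (u:ℝ)*t/8 = (40*(u:ℝ)*ε)/(2560*K) := by
          rw [ht]; ring
        rw [e1]
        apply div_le_div_of_nonneg_right _ (by positivity)
        nlinarith [mul_le_mul_of_nonneg_right hsn40 hε0.le]
      have h5 : (u:ℝ)*t/8 ≤ (u:ℝ)*(1-φ)/8 := by
        apply div_le_div_of_nonneg_right _ (by norm_num)
        apply mul_le_mul_of_nonneg_left h1phi_lb (Nat.cast_nonneg _)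
      have h6 : (u:ℝ)*(1-φ)/8 ≤ (1 - φ^(2*u))/8 :=
        div_le_div_of_nonneg_right hexp (by norm_num)
      rw [hsqrtn_cast]
      have hfirst : (1:ℝ)/10000 * ε * Real.sqrt ((m:ℝ)+(m:ℝ)) / K
          ≤ Real.sqrt ((m:ℝ)+(m:ℝ)) * ε / (2560 * K) := by
        have e2 : Real.sqrt ((m:ℝ)+(m:ℝ)) * ε / (2560 * K)
            = (Real.sqrt ((m:ℝ)+(m:ℝ)) * ε / 2560) / K := by
          rw [div_div]
        rw [e2]
        apply div_le_div_of_nonneg_right _ hK0.le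
        nlinarith [mul_nonneg hε0.le hsn0]
      linarith [htv]
  · -- upper bound
    intro T hT
    apply le_trans (induced_bound hφ0 hφ1.le T hT)
    -- (φ⁻¹^K - 1)/2 ≤ ε
    have hinv : φ⁻¹ = (1+t)/(1-t) := by
      rw [hφ, inv_div]
    have h1mt : (0:ℝ) < 1 - t := by linarith
    have h4t : φ⁻¹ ≤ 1 + 4*t := by
      rw [hinv, div_le_iff₀ h1mt]
      nlinarith
    have hεt : (K:ℝ)*(4*t) = ε/2 := by
      rw [ht]
      field_simp
      ring
    have hpowK : φ⁻¹^K ≤ (1+4*t)^K := by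
      apply pow_le_pow_left₀ (by positivity) h4t
    have haux := aux_pow2 (4*t) (by positivity) (by linarith) K
    rw [hεt] at haux
    have hden : (0:ℝ) < 1 - ε/2 := by linarith
    have hinvK : φ⁻¹^K ≤ 1 + 2*ε := by
      have h1 : (1+4*t)^K * (1 - ε/2) ≤ 1 := haux
      have h2 : (1+2*ε)*(1-ε/2) ≥ 1 := by nlinarith
      have h3 : (0:ℝ) ≤ (1+4*t)^K := pow_nonneg (by positivity) K
      nlinarith
    linarith


end Mallows
end
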